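/- arXiv:1910.10315 — 8 statements merged into one kernel-verified Lean document; each statement's English description precedes it below -/
import Mathlib

section
/- Let n ≥ 1, m ∈ ℕ ∪ {0}, 0 ≤ α < n, 0 < δ < 1 with mδ < n − α, and set α̃ = mδ + α. Let 1 ≤ r ≤ ∞ and δ̃ ≤ δ. Suppose w is a weight such that 0 < essinf_B w < ∞ for every ball B ⊂ ℝⁿ. If w belongs to the class H(r, α̃, δ̃), then δ̃ = α̃ − n/r (with the convention n/∞ = 0). -/
/-!
Test the condition on the balls `B = B(0, R)` and keep only the part of the integral over `B`.
There `|B|^{1/n} + |y| ≲ R` and `w ≥ essinf_B w`, so the integral factor is `≳ essinf_B w ·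
R^{-(n - α̃ + δ)} |B|^{1/r'}`, while `‖w⁻¹ χ_B‖_∞ = (essinf_B w)⁻¹`. The essential infima cancel
and the condition yields `R^{α̃ - δ̃ - n/r} ≲ 1` for all `R > 0`, which forces the exponent to
vanish.
-/

open MeasureTheory Metric ENNReal NNReal

noncomputable section

/-- Euclidean space `ℝⁿ`. -/
abbrev E (n : ℕ) := EuclideanSpace ℝ (Fin n)

/-- `(∫ f^p dμ)^(1/p)` for finite `p`, and the essential supremum for `p = ∞`. -/
noncomputable def eN {n : ℕ} (p : ℝ≥0∞) (f : E n → ℝ≥0∞) (μ : Measure (E n)) : ℝ≥0∞ :=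
  if p = ∞ then essSup f μ else (∫⁻ y, f y ^ p.toReal ∂μ) ^ (1 / p.toReal)

/-- The two-weight class `H(r, αt, δt)` with constant `C`, where `r'` denotes the
conjugate exponent of `r` (so the `r = 1`, `r' = ∞` case is the essential supremum,
built into `eN`). -/
def Hclass (n : ℕ) (r' : ℝ≥0∞) (αt δ δt : ℝ) (v w : E n → ℝ≥0∞) (C : ℝ≥0∞) : Prop :=
  ∀ (c : E n) (R : ℝ), 0 < R →
    essSup (fun y => (w y)⁻¹) (volume.restrict (ball c R)) *
        volume (ball c R) ^ ((δ - δt) / (n : ℝ)) *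
        eN r' (fun y =>
          v y * (volume (ball c R) ^ ((1 : ℝ) / (n : ℝ)) +
            ENNReal.ofReal (dist c y)) ^ (-((n : ℝ) - αt + δ))) volume ≤ C

/-- The local condition (L) with constant `C`. -/
def LocalCond (n : ℕ) (r r' : ℝ≥0∞) (αt δt : ℝ) (v w : E n → ℝ≥0∞) (C : ℝ≥0∞) : Prop :=
  ∀ (c : E n) (R : ℝ), 0 < R →
    essSup (fun y => (w y)⁻¹) (volume.restrict (ball c R)) *
        volume (ball c R) ^ ((αt - δt) / (n : ℝ) - r⁻¹.toReal) *
        eN r' v ((volume (ball c R))⁻¹ • volume.restrict (ball c R)) ≤ C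

/-- The global condition (G) with constant `C`. -/
def GlobalCond (n : ℕ) (r' : ℝ≥0∞) (αt δ δt : ℝ) (v w : E n → ℝ≥0∞) (C : ℝ≥0∞) : Prop :=
  ∀ (c : E n) (R : ℝ), 0 < R →
    essSup (fun y => (w y)⁻¹) (volume.restrict (ball c R)) *
        volume (ball c R) ^ ((δ - δt) / (n : ℝ)) *
        eN r' (fun y => v y * (ENNReal.ofReal (dist c y)) ^ (-((n : ℝ) - αt + δ)))
          (volume.restrict ((ball c R)ᶜ)) ≤ C

/-- `b ∈ Λ(δ)` with Lipschitz-`δ` constant `Cb`. -/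
def LipDelta {n : ℕ} (δ Cb : ℝ) (b : E n → ℝ) : Prop :=
  ∀ x y : E n, |b x - b y| ≤ Cb * dist x y ^ δ

/-- The size condition `S*_α` with constant `A`. -/
def SizeCond (n : ℕ) (α A : ℝ) (K : E n → ℝ) : Prop :=
  ∀ x : E n, x ≠ 0 → |K x| ≤ A * ‖x‖ ^ (α - (n : ℝ))

/-- The smoothness condition `H*_{α,∞}` with exponent `γ` and constant `A`. -/
def SmoothCond (n : ℕ) (α γ A : ℝ) (K : E n → ℝ) : Prop :=
  ∀ x x' y : E n, 2 * dist x x' ≤ dist x y →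
    |K (x - y) - K (x' - y)| + |K (y - x) - K (y - x')| ≤
      A * dist x x' ^ γ / dist x y ^ ((n : ℝ) - α + γ)

lemma ENNReal.eq_zero_of_forall_mul_ofReal_rpow_le {κ C : ℝ≥0∞} {t : ℝ} (hκ : κ ≠ 0)
    (hC : C ≠ ∞) (h : ∀ R : ℝ, 0 < R → κ * ENNReal.ofReal R ^ t ≤ C) : t = 0 := by
  by_contra ht
  set M : ℝ≥0∞ := C / κ + 1
  have hM0 : 0 < M := zero_lt_one.trans_le le_add_self
  have hM : M ≠ ∞ := add_ne_top.mpr ⟨div_ne_top hC hκ, one_ne_top⟩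
  set x : ℝ≥0∞ := M ^ t⁻¹
  have hx0 : x ≠ 0 := (rpow_pos hM0 hM).ne'
  have hxtop : x ≠ ∞ := rpow_ne_top_of_ne_zero hM0.ne' hM
  have hle : M ≤ C / κ := by
    rw [ENNReal.le_div_iff_mul_le (Or.inl hκ) (Or.inr hC), mul_comm, ← rpow_inv_rpow ht M]
    simpa [ofReal_toReal hxtop] using h x.toReal (toReal_pos hx0 hxtop)
  exact absurd hle (not_le.mpr (lt_add_right (div_ne_top hC hκ) one_ne_zero))

lemma le_eN_of_ae_le {n : ℕ} {p : ℝ≥0∞} (hp : p ≠ 0) {f : E n → ℝ≥0∞} {μ : Measure (E n)}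
    {S : Set (E n)} (hS : μ S ≠ 0) {a : ℝ≥0∞} (hf : ∀ᵐ y ∂μ.restrict S, a ≤ f y) :
    a * μ S ^ (p⁻¹).toReal ≤ eN p f μ := by
  rcases eq_or_ne p ∞ with rfl | hp_top
  · have hμS : μ.restrict S ≠ 0 := by rwa [Ne, Measure.restrict_eq_zero]
    calc a * μ S ^ (∞⁻¹ : ℝ≥0∞).toReal = essSup (fun _ => a) (μ.restrict S) := by
          simp [essSup_const _ hμS]
      _ ≤ essSup f (μ.restrict S) := essSup_mono_ae hf
      _ ≤ eN ∞ f μ := by rw [eN, if_pos rfl]; exact essSup_mono_measure' Measure.restrict_le_self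
  · have hp_pos : 0 < p.toReal := toReal_pos hp hp_top
    have hlint : a ^ p.toReal * μ S ≤ ∫⁻ y, f y ^ p.toReal ∂μ :=
      calc a ^ p.toReal * μ S = ∫⁻ _, a ^ p.toReal ∂μ.restrict S := by
            rw [lintegral_const, Measure.restrict_apply_univ]
        _ ≤ ∫⁻ y, f y ^ p.toReal ∂μ.restrict S :=
            lintegral_mono_ae (hf.mono fun y hy => rpow_le_rpow hy hp_pos.le)
        _ ≤ ∫⁻ y, f y ^ p.toReal ∂μ := lintegral_mono' Measure.restrict_le_self le_rfl
    calc a * μ S ^ (p⁻¹).toReal = (a ^ p.toReal * μ S) ^ (1 / p.toReal) := by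
          rw [mul_rpow_of_nonneg _ _ (by positivity), ← ENNReal.rpow_mul,
            mul_one_div_cancel hp_pos.ne', ENNReal.rpow_one, toReal_inv, one_div]
      _ ≤ eN p f μ := by
          rw [eN, if_neg hp_top]; exact rpow_le_rpow hlint (by positivity)

lemma volume_ball_rpow {n : ℕ} (c : E n) {R : ℝ} (hR : 0 < R) (x : ℝ) :
    volume (ball c R) ^ x = ENNReal.ofReal R ^ ((n : ℝ) * x) * volume (ball (0 : E n) 1) ^ x := by
  rw [Measure.addHaar_ball_of_pos volume c hR, finrank_euclideanSpace_fin, ofReal_pow hR.le,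
    ← ENNReal.rpow_natCast, mul_rpow_of_ne_zero _ (measure_ball_pos _ _ one_pos).ne',
    ← ENNReal.rpow_mul]
  exact (rpow_pos (ofReal_pos.mpr hR) ofReal_ne_top).ne'

lemma volume_ball_rpow_inv_add_dist_le {n : ℕ} (hn : n ≠ 0) {c y : E n} {R : ℝ} (hR : 0 < R)
    (hy : y ∈ ball c R) :
    volume (ball c R) ^ ((1 : ℝ) / n) + ENNReal.ofReal (dist c y) ≤
      ENNReal.ofReal R * (volume (ball (0 : E n) 1) ^ ((1 : ℝ) / n) + 1) := by
  rw [volume_ball_rpow c hR, mul_one_div_cancel (Nat.cast_ne_zero.mpr hn), ENNReal.rpow_one,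
    mul_add, mul_one]
  exact add_le_add le_rfl (ofReal_le_ofReal (dist_comm c y ▸ (mem_ball.mp hy).le))

lemma Hclass.exists_essInf_mul_rpow_le {n : ℕ} (hn : n ≠ 0) {r' : ℝ≥0∞} (hr' : r' ≠ 0)
    {αt δ δt : ℝ} (hs : 0 ≤ (n : ℝ) - αt + δ) {v w : E n → ℝ≥0∞} {C : ℝ≥0∞}
    (hH : Hclass n r' αt δ δt v w C) :
    ∃ κ : ℝ≥0∞, κ ≠ 0 ∧ ∀ (c : E n) (R : ℝ), 0 < R →
      (essInf w (volume.restrict (ball c R)))⁻¹ * essInf v (volume.restrict (ball c R)) *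
        (κ * ENNReal.ofReal R ^ (αt - δt - n * (1 - (r'⁻¹).toReal))) ≤ C := by
  set s := (n : ℝ) - αt + δ
  set q := (r'⁻¹).toReal
  set V₁ := volume (ball (0 : E n) 1)
  have hV₁ : 0 < V₁ := measure_ball_pos _ _ one_pos
  have hV₁_top : V₁ ≠ ∞ := measure_ball_lt_top.ne
  set K := V₁ ^ ((1 : ℝ) / n) + 1
  have hK : K ≠ 0 := by simp [K]
  have hK_top : K ≠ ∞ := add_ne_top.mpr ⟨rpow_ne_top_of_ne_zero hV₁.ne' hV₁_top, one_ne_top⟩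
  refine ⟨V₁ ^ ((δ - δt) / n) * (K ^ (-s) * V₁ ^ q), ?_, fun c R hR => ?_⟩
  · exact mul_ne_zero (rpow_pos hV₁ hV₁_top).ne' <| mul_ne_zero
      (rpow_pos (pos_iff_ne_zero.mpr hK) hK_top).ne' (rpow_pos hV₁ hV₁_top).ne'
  set ρ := ENNReal.ofReal R
  have hρ : ρ ≠ 0 := (ofReal_pos.mpr hR).ne'
  set B := ball c R
  set Iw := essInf w (volume.restrict B)
  set Iv := essInf v (volume.restrict B)
  have hinv : Iw⁻¹ = essSup (fun y => (w y)⁻¹) (volume.restrict B) :=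
    OrderIso.invENNReal.essInf_apply w _
  have hkernel : ∀ᵐ y ∂volume.restrict B,
      Iv * (ρ * K) ^ (-s) ≤
        v y * (volume B ^ ((1 : ℝ) / n) + ENNReal.ofReal (dist c y)) ^ (-s) := by
    filter_upwards [ae_essInf_le (f := v), ae_restrict_mem measurableSet_ball] with y hvy hy
    refine mul_le_mul' hvy ?_
    rw [ENNReal.rpow_neg, ENNReal.rpow_neg]
    exact ENNReal.inv_le_inv' (rpow_le_rpow (volume_ball_rpow_inv_add_dist_le hn hR hy) hs)
  have hρ_exp :
      ρ ^ (αt - δt - n * (1 - q)) = ρ ^ (n * ((δ - δt) / n)) * ρ ^ (-s) * ρ ^ (n * q) := by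
    rw [← rpow_add _ _ hρ ofReal_ne_top, ← rpow_add _ _ hρ ofReal_ne_top]
    congr 1
    field_simp
    ring
  calc Iw⁻¹ * Iv * (V₁ ^ ((δ - δt) / n) * (K ^ (-s) * V₁ ^ q) * ρ ^ (αt - δt - n * (1 - q)))
      = Iw⁻¹ * volume B ^ ((δ - δt) / n) * (Iv * (ρ * K) ^ (-s) * volume B ^ q) := by
        rw [volume_ball_rpow c hR, volume_ball_rpow c hR, mul_rpow_of_ne_zero hρ hK, hρ_exp]
        ring
    _ ≤ C := by
        refine le_trans ?_ (hH c R hR)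
        rw [hinv]
        exact mul_le_mul' le_rfl (le_eN_of_ae_le hr' (measure_ball_pos _ _ hR).ne' hkernel)

theorem statement0_general (n m : ℕ) (α δ δt αt : ℝ) (r r' : ℝ≥0∞)
    (hn : 1 ≤ n) (hδ0 : 0 < δ)
    (hmδ : (m : ℝ) * δ < (n : ℝ) - α) (hαt : αt = (m : ℝ) * δ + α)
    (hconj : r⁻¹ + r'⁻¹ = 1)
    (w : E n → ℝ≥0∞)
    (hinf : ∀ (c : E n) (R : ℝ), 0 < R →
      0 < essInf w (volume.restrict (ball c R)) ∧
        essInf w (volume.restrict (ball c R)) < ∞)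
    (C : ℝ≥0) (hH : Hclass n r' αt δ δt w w (C : ℝ≥0∞)) :
    δt = αt - (n : ℝ) * r⁻¹.toReal := by
  have hr_inv : r⁻¹ ≠ ∞ := ne_top_of_le_ne_top one_ne_top (hconj ▸ le_self_add)
  have hr'_inv : r'⁻¹ ≠ ∞ := ne_top_of_le_ne_top one_ne_top (hconj ▸ le_add_self)
  have hconj_real : r⁻¹.toReal = 1 - r'⁻¹.toReal := by
    have := congrArg ENNReal.toReal hconj
    rw [toReal_add hr_inv hr'_inv, toReal_one] at this
    linarith
  obtain ⟨κ, hκ, hbound⟩ := hH.exists_essInf_mul_rpow_le (by omega) (inv_ne_top.mp hr'_inv)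
    (by rw [hαt]; linarith)
  have hexp := ENNReal.eq_zero_of_forall_mul_ofReal_rpow_le hκ coe_ne_top fun R hR => by
    obtain ⟨hI, hI_top⟩ := hinf 0 R hR
    simpa only [ENNReal.inv_mul_cancel hI.ne' hI_top.ne, one_mul] using hbound 0 R hR
  rw [hconj_real]
  linarith

/-- if a single weight `w`, with `0 < essinf_B w < ∞` on every ball,
belongs to `H(r, α̃, δ̃)`, then `δ̃ = α̃ − n/r`. -/
theorem statement0 (n m : ℕ) (α δ δt αt : ℝ) (r r' : ℝ≥0∞)
    (hn : 1 ≤ n) (hα0 : 0 ≤ α) (hαn : α < (n : ℝ)) (hδ0 : 0 < δ) (hδ1 : δ < 1)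
    (hmδ : (m : ℝ) * δ < (n : ℝ) - α) (hαt : αt = (m : ℝ) * δ + α)
    (hr : 1 ≤ r) (hconj : r⁻¹ + r'⁻¹ = 1) (hδt : δt ≤ δ)
    (w : E n → ℝ≥0∞) (hwm : Measurable w)
    (hinf : ∀ (c : E n) (R : ℝ), 0 < R →
      0 < essInf w (volume.restrict (ball c R)) ∧
        essInf w (volume.restrict (ball c R)) < ∞)
    (C : ℝ≥0) (hH : Hclass n r' αt δ δt w w (C : ℝ≥0∞)) :
    δt = αt - (n : ℝ) * r⁻¹.toReal :=
  statement0_general n m α δ δt αt r r' hn hδ0 hmδ hαt hconj w hinf C hH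
end
end

section
/- Let n ≥ 1, m ∈ ℕ ∪ {0}, 0 ≤ α < n, 0 < δ < 1 with mδ < n − α, α̃ = mδ + α, 1 ≤ r ≤ ∞ and δ̃ ≤ δ. A pair of weights (v,w) belongs to the class H(r, α̃, δ̃) if and only if it satisfies both the local condition (L) and the global condition (G) for some finite constants. Quantitatively: if (v,w) ∈ H(r, α̃, δ̃) with constant C then (L) and (G) hold with constant c·C, and conversely if (L) and (G) hold with constant C then (v,w) ∈ H(r, α̃, δ̃) with constant c·C, where c depends only on n, r, α̃, δ, δ̃. -/
open MeasureTheory Metric ENNReal NNReal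

noncomputable section

/-! Write `ℓ = |B|^{1/n} = ω_n^{1/n} R` and `s = n - α̃ + δ ≥ 0`. The kernel `(ℓ + |x_B - y|)^{-s}`
of `H(r, α̃, δ̃)` is comparable to `ℓ^{-s}` on `B` and to `|x_B - y|^{-s}` off `B`, with constants
depending only on `n` and `s`. Splitting its `L^{r'}` norm over `B` and `ℝⁿ ∖ B` therefore bounds
the `H` quantity by the sum of the (L) and (G) quantities, and each of these by the `H` quantity;
the powers of `|B|` match because `1/r + 1/r' = 1`. -/

namespace ENNReal

lemma rpow_neg_le_rpow_neg {s : ℝ} (hs : 0 ≤ s) {a b : ℝ≥0∞} (hab : a ≤ b) :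
    b ^ (-s) ≤ a ^ (-s) := by
  rw [rpow_neg, rpow_neg]
  exact ENNReal.inv_le_inv.mpr (rpow_le_rpow hab hs)

lemma rpow_neg_le_mul_rpow_neg {s : ℝ} (hs : 0 ≤ s) {Λ a b : ℝ≥0∞} (hΛ0 : Λ ≠ 0)
    (hΛt : Λ ≠ ⊤) (h : a ≤ Λ * b) : b ^ (-s) ≤ Λ ^ s * a ^ (-s) := by
  have hΛs0 : Λ ^ s ≠ 0 := (rpow_pos hΛ0.bot_lt hΛt).ne'
  have hΛst : Λ ^ s ≠ ⊤ := rpow_ne_top_of_nonneg hs hΛt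
  calc b ^ (-s) = Λ ^ s * (Λ * b) ^ (-s) := by
        rw [rpow_neg, rpow_neg, mul_rpow_of_nonneg _ _ hs, ENNReal.mul_inv (.inl hΛs0) (.inl hΛst),
          ← mul_assoc, ENNReal.mul_inv_cancel hΛs0 hΛst, one_mul]
    _ ≤ Λ ^ s * a ^ (-s) := mul_le_mul_right (rpow_neg_le_rpow_neg hs h) _

end ENNReal

section eN

variable {n : ℕ} {p : ℝ≥0∞} {f g : E n → ℝ≥0∞} {μ ν : Measure (E n)}

lemma eN_mono_ae (h : ∀ᵐ y ∂μ, f y ≤ g y) : eN p f μ ≤ eN p g μ := by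
  unfold eN
  split_ifs
  · exact essSup_mono_ae h
  · exact rpow_le_rpow (lintegral_mono_ae (h.mono fun y hy => rpow_le_rpow hy toReal_nonneg))
      (by positivity)

lemma eN_mono_measure (h : μ ≤ ν) : eN p f μ ≤ eN p f ν := by
  unfold eN
  split_ifs
  · exact essSup_mono_measure' h
  · exact rpow_le_rpow (lintegral_mono' h le_rfl) (by positivity)

lemma eN_const_mul (hp : p ≠ 0) {a : ℝ≥0∞} (ha : a ≠ ⊤) :
    eN p (fun y => a * f y) μ = a * eN p f μ := by
  unfold eN
  split_ifs with h
  · exact essSup_const_mul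
  · have hp' : 0 < p.toReal := toReal_pos hp h
    simp_rw [mul_rpow_of_nonneg _ _ hp'.le]
    rw [lintegral_const_mul' _ _ (rpow_ne_top_of_nonneg hp'.le ha),
      mul_rpow_of_nonneg _ _ (by positivity), ← ENNReal.rpow_mul, mul_one_div_cancel hp'.ne',
      ENNReal.rpow_one]

lemma eN_smul_measure {a : ℝ≥0∞} (ha : a ≠ 0) : eN p f (a • μ) = a ^ p⁻¹.toReal * eN p f μ := by
  unfold eN
  split_ifs with h
  · simp [essSup_ennreal_smul_measure ha, h]
  · rw [lintegral_smul_measure, smul_eq_mul, mul_rpow_of_nonneg _ _ (by positivity), toReal_inv,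
      one_div]

lemma eN_le_add_restrict_compl (hp : 1 ≤ p) {B : Set (E n)} (hB : MeasurableSet B) :
    eN p f μ ≤ eN p f (μ.restrict B) + eN p f (μ.restrict Bᶜ) := by
  unfold eN
  split_ifs with h
  · conv_lhs => rw [← Measure.restrict_add_restrict_compl (μ := μ) hB]
    exact essSup_le_of_ae_le _ (ae_add_measure_iff.mpr
      ⟨(ae_le_essSup f).mono fun y hy => hy.trans le_self_add,
        (ae_le_essSup f).mono fun y hy => hy.trans le_add_self⟩)
  · have hp' : 1 ≤ p.toReal := by simpa using toReal_mono h hp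
    rw [← lintegral_add_compl _ hB]
    exact rpow_add_le_add_rpow _ _ (by positivity) (by rw [div_le_one (by linarith)]; exact hp')

lemma eN_restrict_le_const_mul (hp : p ≠ 0) {a : ℝ≥0∞} (ha : a ≠ ⊤) {S : Set (E n)}
    (hS : MeasurableSet S) (h : ∀ y ∈ S, f y ≤ a * g y) : eN p f (μ.restrict S) ≤ a * eN p g μ :=
  calc eN p f (μ.restrict S) ≤ eN p (fun y => a * g y) (μ.restrict S) :=
        eN_mono_ae (ae_restrict_of_forall_mem hS h)
    _ = a * eN p g (μ.restrict S) := eN_const_mul hp ha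
    _ ≤ a * eN p g μ := by gcongr; exact eN_mono_measure Measure.restrict_le_self

end eN

lemma ENNReal.HolderConjugate.toReal_inv_add_toReal_inv (p q : ℝ≥0∞) [p.HolderConjugate q] :
    p⁻¹.toReal + q⁻¹.toReal = 1 := by
  rw [← toReal_add (inv_ne_top.mpr (HolderConjugate.ne_zero p q))
    (inv_ne_top.mpr (HolderConjugate.ne_zero q p)), HolderConjugate.inv_add_inv_eq_one p q,
    toReal_one]

def unitBallScale (n : ℕ) : ℝ≥0∞ := volume (ball (0 : E n) 1) ^ ((1 : ℝ) / n)

section Geometry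

variable {n : ℕ} {c y : E n} {R : ℝ}

lemma unitBallScale_ne_zero : unitBallScale n ≠ 0 :=
  (rpow_pos (measure_ball_pos volume _ one_pos) measure_ball_lt_top.ne).ne'

lemma unitBallScale_ne_top : unitBallScale n ≠ ⊤ :=
  rpow_ne_top_of_nonneg (by positivity) measure_ball_lt_top.ne

lemma volume_ball_rpow_inv (hn : n ≠ 0) (c : E n) (hR : 0 ≤ R) :
    volume (ball c R) ^ ((1 : ℝ) / n) = ENNReal.ofReal R * unitBallScale n := by
  have : Nonempty (Fin n) := ⟨⟨0, Nat.pos_of_ne_zero hn⟩⟩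
  rw [Measure.addHaar_ball volume c hR, finrank_euclideanSpace_fin, ofReal_pow hR,
    mul_rpow_of_nonneg _ _ (by positivity), one_div, pow_rpow_inv_natCast hn, unitBallScale,
    one_div]

lemma volume_ball_rpow_add_le_of_mem (hn : n ≠ 0) (hy : y ∈ ball c R) :
    volume (ball c R) ^ ((1 : ℝ) / n) + ENNReal.ofReal (dist c y) ≤
      (1 + (unitBallScale n)⁻¹) * volume (ball c R) ^ ((1 : ℝ) / n) := by
  rw [volume_ball_rpow_inv hn c (pos_of_mem_ball hy).le, add_mul, one_mul,
    mul_comm (ENNReal.ofReal R), ← mul_assoc,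
    ENNReal.inv_mul_cancel unitBallScale_ne_zero unitBallScale_ne_top, one_mul]
  gcongr
  exact (mem_ball'.mp hy).le

lemma volume_ball_rpow_add_le_of_notMem (hn : n ≠ 0) (hR : 0 ≤ R) (hy : y ∉ ball c R) :
    volume (ball c R) ^ ((1 : ℝ) / n) + ENNReal.ofReal (dist c y) ≤
      (unitBallScale n + 1) * ENNReal.ofReal (dist c y) := by
  rw [volume_ball_rpow_inv hn c hR, add_mul, one_mul, mul_comm (unitBallScale n)]
  gcongr
  exact not_lt.mp (mt mem_ball'.mpr hy)

end Geometry

section Conditions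

variable {n : ℕ} {r r' : ℝ≥0∞} {αt δ δt : ℝ} {v w : E n → ℝ≥0∞} {C D : ℝ≥0∞}

lemma Hclass.mono (h : Hclass n r' αt δ δt v w C) (hCD : C ≤ D) :
    Hclass n r' αt δ δt v w D :=
  fun c R hR => (h c R hR).trans hCD

lemma LocalCond.mono (h : LocalCond n r r' αt δt v w C) (hCD : C ≤ D) :
    LocalCond n r r' αt δt v w D :=
  fun c R hR => (h c R hR).trans hCD

lemma GlobalCond.mono (h : GlobalCond n r' αt δ δt v w C) (hCD : C ≤ D) :
    GlobalCond n r' αt δ δt v w D :=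
  fun c R hR => (h c R hR).trans hCD

lemma volume_ball_rpow_mul_eN_average [r.HolderConjugate r'] (hn : n ≠ 0) (c : E n) {R : ℝ}
    (hR : 0 < R) (v : E n → ℝ≥0∞) :
    volume (ball c R) ^ ((αt - δt) / n - r⁻¹.toReal) *
        eN r' v ((volume (ball c R))⁻¹ • volume.restrict (ball c R)) =
      volume (ball c R) ^ ((δ - δt) / n) *
        eN r' (fun y => (volume (ball c R) ^ ((1 : ℝ) / n)) ^ (-((n : ℝ) - αt + δ)) * v y)
          (volume.restrict (ball c R)) := by
  have hx0 : volume (ball c R) ≠ 0 := (measure_ball_pos volume c hR).ne'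
  have hxt : volume (ball c R) ≠ ⊤ := measure_ball_lt_top.ne
  have hconj := HolderConjugate.toReal_inv_add_toReal_inv r r'
  rw [eN_smul_measure (ENNReal.inv_ne_zero.mpr hxt), eN_const_mul (HolderConjugate.ne_zero r' r)
      (rpow_ne_top_of_ne_zero (rpow_pos hx0.bot_lt hxt).ne'
        (rpow_ne_top_of_nonneg (by positivity) hxt)),
    ENNReal.inv_rpow, ← ENNReal.rpow_neg, ← ENNReal.rpow_mul,
    ← mul_assoc, ← mul_assoc, ← ENNReal.rpow_add _ _ hx0 hxt, ← ENNReal.rpow_add _ _ hx0 hxt]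
  congr 2
  field_simp
  linear_combination (-(n : ℝ)) * hconj

lemma Hclass.localCond [r.HolderConjugate r'] (hn : n ≠ 0) (hs : 0 ≤ (n : ℝ) - αt + δ)
    (h : Hclass n r' αt δ δt v w C) :
    LocalCond n r r' αt δt v w ((1 + (unitBallScale n)⁻¹) ^ ((n : ℝ) - αt + δ) * C) := by
  intro c R hR
  set s := (n : ℝ) - αt + δ
  set Λ := 1 + (unitBallScale n)⁻¹
  set ℓ := volume (ball c R) ^ ((1 : ℝ) / n)
  have hΛ0 : Λ ≠ 0 := by positivity
  have hΛt : Λ ≠ ⊤ := add_ne_top.mpr ⟨one_ne_top, inv_ne_top.mpr unitBallScale_ne_zero⟩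
  have hkernel : ∀ y ∈ ball c R,
      ℓ ^ (-s) * v y ≤ Λ ^ s * (v y * (ℓ + ENNReal.ofReal (dist c y)) ^ (-s)) := fun y hy =>
    calc ℓ ^ (-s) * v y ≤ Λ ^ s * (ℓ + ENNReal.ofReal (dist c y)) ^ (-s) * v y := by
          gcongr
          exact rpow_neg_le_mul_rpow_neg hs hΛ0 hΛt (volume_ball_rpow_add_le_of_mem hn hy)
      _ = Λ ^ s * (v y * (ℓ + ENNReal.ofReal (dist c y)) ^ (-s)) := by ring
  rw [mul_assoc, volume_ball_rpow_mul_eN_average hn c hR]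
  calc _ ≤ essSup (fun y => (w y)⁻¹) (volume.restrict (ball c R)) *
        (volume (ball c R) ^ ((δ - δt) / n) *
          (Λ ^ s * eN r' (fun y => v y * (ℓ + ENNReal.ofReal (dist c y)) ^ (-s)) volume)) := by
        gcongr
        exact eN_restrict_le_const_mul (HolderConjugate.ne_zero r' r)
          (rpow_ne_top_of_nonneg hs hΛt) measurableSet_ball hkernel
    _ = Λ ^ s * (essSup (fun y => (w y)⁻¹) (volume.restrict (ball c R)) *
          volume (ball c R) ^ ((δ - δt) / n) *
          eN r' (fun y => v y * (ℓ + ENNReal.ofReal (dist c y)) ^ (-s)) volume) := by ring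
    _ ≤ Λ ^ s * C := by gcongr; exact h c R hR

lemma Hclass.globalCond (hn : n ≠ 0) (hr' : r' ≠ 0) (hs : 0 ≤ (n : ℝ) - αt + δ)
    (h : Hclass n r' αt δ δt v w C) :
    GlobalCond n r' αt δ δt v w ((unitBallScale n + 1) ^ ((n : ℝ) - αt + δ) * C) := by
  intro c R hR
  set s := (n : ℝ) - αt + δ
  set Λ := unitBallScale n + 1
  set ℓ := volume (ball c R) ^ ((1 : ℝ) / n)
  have hΛ0 : Λ ≠ 0 := by positivity
  have hΛt : Λ ≠ ⊤ := add_ne_top.mpr ⟨unitBallScale_ne_top, one_ne_top⟩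
  have hkernel : ∀ y ∈ (ball c R)ᶜ, v y * ENNReal.ofReal (dist c y) ^ (-s) ≤
      Λ ^ s * (v y * (ℓ + ENNReal.ofReal (dist c y)) ^ (-s)) := fun y hy =>
    calc v y * ENNReal.ofReal (dist c y) ^ (-s)
        ≤ v y * (Λ ^ s * (ℓ + ENNReal.ofReal (dist c y)) ^ (-s)) := by
          gcongr
          exact rpow_neg_le_mul_rpow_neg hs hΛ0 hΛt
            (volume_ball_rpow_add_le_of_notMem hn hR.le hy)
      _ = Λ ^ s * (v y * (ℓ + ENNReal.ofReal (dist c y)) ^ (-s)) := by ring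
  calc _ ≤ essSup (fun y => (w y)⁻¹) (volume.restrict (ball c R)) *
        volume (ball c R) ^ ((δ - δt) / n) *
          (Λ ^ s * eN r' (fun y => v y * (ℓ + ENNReal.ofReal (dist c y)) ^ (-s)) volume) := by
        gcongr
        exact eN_restrict_le_const_mul hr' (rpow_ne_top_of_nonneg hs hΛt)
          measurableSet_ball.compl hkernel
    _ = Λ ^ s * (essSup (fun y => (w y)⁻¹) (volume.restrict (ball c R)) *
          volume (ball c R) ^ ((δ - δt) / n) *
          eN r' (fun y => v y * (ℓ + ENNReal.ofReal (dist c y)) ^ (-s)) volume) := by ring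
    _ ≤ Λ ^ s * C := by gcongr; exact h c R hR

lemma Hclass.of_localCond_globalCond [r.HolderConjugate r'] (hn : n ≠ 0)
    (hs : 0 ≤ (n : ℝ) - αt + δ) (hL : LocalCond n r r' αt δt v w C)
    (hG : GlobalCond n r' αt δ δt v w C) : Hclass n r' αt δ δt v w (2 * C) := by
  intro c R hR
  set s := (n : ℝ) - αt + δ
  set ℓ := volume (ball c R) ^ ((1 : ℝ) / n)
  set W := essSup (fun y => (w y)⁻¹) (volume.restrict (ball c R))
  have hlocal := hL c R hR
  rw [mul_assoc, volume_ball_rpow_mul_eN_average hn c hR, ← mul_assoc] at hlocal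
  calc _ ≤ W * volume (ball c R) ^ ((δ - δt) / n) *
        (eN r' (fun y => v y * (ℓ + ENNReal.ofReal (dist c y)) ^ (-s))
            (volume.restrict (ball c R)) +
          eN r' (fun y => v y * (ℓ + ENNReal.ofReal (dist c y)) ^ (-s))
            (volume.restrict (ball c R)ᶜ)) := by
        gcongr
        exact eN_le_add_restrict_compl (HolderConjugate.one_le r' r) measurableSet_ball
    _ ≤ W * volume (ball c R) ^ ((δ - δt) / n) *
        (eN r' (fun y => ℓ ^ (-s) * v y) (volume.restrict (ball c R)) +
          eN r' (fun y => v y * ENNReal.ofReal (dist c y) ^ (-s))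
            (volume.restrict (ball c R)ᶜ)) := by
        gcongr <;> refine eN_mono_ae (ae_of_all _ fun y => ?_)
        · rw [mul_comm]
          exact mul_le_mul' (rpow_neg_le_rpow_neg hs le_self_add) le_rfl
        · exact mul_le_mul' le_rfl (rpow_neg_le_rpow_neg hs le_add_self)
    _ ≤ C + C := by rw [mul_add]; exact add_le_add hlocal (hG c R hR)
    _ = 2 * C := (two_mul C).symm

end Conditions

theorem statement2_general (n m : ℕ) (α δ δt αt : ℝ) (r r' : ℝ≥0∞)
    (hn : 1 ≤ n) (hδ0 : 0 < δ)
    (hmδ : (m : ℝ) * δ < (n : ℝ) - α) (hαt : αt = (m : ℝ) * δ + α)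
    (hconj : r⁻¹ + r'⁻¹ = 1) :
    ∃ c : ℝ≥0, 0 < c ∧
      ∀ (v w : E n → ℝ≥0∞), Measurable v → Measurable w → ∀ C : ℝ≥0,
        (Hclass n r' αt δ δt v w (C : ℝ≥0∞) →
          LocalCond n r r' αt δt v w ((c : ℝ≥0∞) * C) ∧
            GlobalCond n r' αt δ δt v w ((c : ℝ≥0∞) * C)) ∧
        ((LocalCond n r r' αt δt v w (C : ℝ≥0∞) ∧
            GlobalCond n r' αt δ δt v w (C : ℝ≥0∞)) →
          Hclass n r' αt δ δt v w ((c : ℝ≥0∞) * C)) := by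
  have : r.HolderConjugate r' := holderConjugate_iff.mpr hconj
  have hn0 : n ≠ 0 := by omega
  have hs : 0 ≤ (n : ℝ) - αt + δ := by rw [hαt]; linarith
  set cL := (1 + (unitBallScale n)⁻¹) ^ ((n : ℝ) - αt + δ)
  set cG := (unitBallScale n + 1) ^ ((n : ℝ) - αt + δ)
  have hct : cL + cG + 2 ≠ ⊤ := by
    have := @unitBallScale_ne_zero n
    have := @unitBallScale_ne_top n
    finiteness
  refine ⟨(cL + cG + 2).toNNReal, toNNReal_pos (by positivity) hct, fun v w _ _ C =>
    ⟨fun hH => ⟨?_, ?_⟩, fun hLG => ?_⟩⟩ <;> rw [coe_toNNReal hct]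
  · exact (hH.localCond hn0 hs).mono (by gcongr; exact le_self_add.trans le_self_add)
  · exact (hH.globalCond hn0 (HolderConjugate.ne_zero r' r) hs).mono
      (by gcongr; exact le_add_self.trans le_self_add)
  · exact (Hclass.of_localCond_globalCond hn0 hs hLG.1 hLG.2).mono (by gcongr; exact le_add_self)

/-- `(v,w) ∈ H(r, α̃, δ̃)` is quantitatively equivalent to the local
condition (L) together with the global condition (G). -/
theorem statement2 (n m : ℕ) (α δ δt αt : ℝ) (r r' : ℝ≥0∞)
    (hn : 1 ≤ n) (hα0 : 0 ≤ α) (hαn : α < (n : ℝ)) (hδ0 : 0 < δ) (hδ1 : δ < 1)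
    (hmδ : (m : ℝ) * δ < (n : ℝ) - α) (hαt : αt = (m : ℝ) * δ + α)
    (hr : 1 ≤ r) (hconj : r⁻¹ + r'⁻¹ = 1) (hδt : δt ≤ δ) :
    ∃ c : ℝ≥0, 0 < c ∧
      ∀ (v w : E n → ℝ≥0∞), Measurable v → Measurable w → ∀ C : ℝ≥0,
        (Hclass n r' αt δ δt v w (C : ℝ≥0∞) →
          LocalCond n r r' αt δt v w ((c : ℝ≥0∞) * C) ∧
            GlobalCond n r' αt δ δt v w ((c : ℝ≥0∞) * C)) ∧
        ((LocalCond n r r' αt δt v w (C : ℝ≥0∞) ∧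
            GlobalCond n r' αt δ δt v w (C : ℝ≥0∞)) →
          Hclass n r' αt δ δt v w ((c : ℝ≥0∞) * C)) :=
  statement2_general n m α δ δt αt r r' hn hδ0 hmδ hαt hconj
end
end

section
/- Let n ≥ 1, m ∈ ℕ ∪ {0}, 0 ≤ α < n, 0 < δ < 1 with mδ < n − α, α̃ = mδ + α, 1 ≤ r ≤ ∞ and δ̃ < δ. If a pair of weights (v,w) satisfies the local condition (L) with constant C, then it satisfies the global condition (G) with constant c·C, where c depends only on n, r, α̃, δ and δ̃. -/
open MeasureTheory Metric ENNReal NNReal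

noncomputable section

/-!
Cover the complement of `B = B(c, R)` by the dyadic annuli `B_{k+1} \ B_k`, `B_k = B(c, 2^k R)`.
On the `k`-th annulus `|c - y|^{-(n - α̃ + δ)} ≤ (2^k R)^{-(n - α̃ + δ)}`, and condition (L) on
`B_{k+1}` controls the `L^{r'}` norm of `v` there; `‖1/w‖_{L^∞(B)}` is at most the same quantity
on `B_{k+1}`. After the normalisation `|B|^{(δ - δ̃)/n}` the `k`-th annulus contributes at most
`C K 2^{-k(δ - δ̃)}` with `K = K(n, α̃, δ, δ̃)`, and since `δ̃ < δ` Minkowski's inequality over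
the annuli sums this to `C K / (1 - 2^{-(δ - δ̃)})`.
-/

namespace ENNReal

theorem tsum_rpow_le_rpow_tsum {ι : Type*} {t : ℝ} (ht : 1 ≤ t) (a : ι → ℝ≥0∞) :
    ∑' i, a i ^ t ≤ (∑' i, a i) ^ t := by
  have ht' : 0 ≤ t - 1 := sub_nonneg.2 ht
  have hsplit : ∀ x : ℝ≥0∞, x ^ t = x * x ^ (t - 1) := fun x => by
    simpa using rpow_add_of_nonneg (x := x) 1 (t - 1) zero_le_one ht'
  calc ∑' i, a i ^ t = ∑' i, a i * a i ^ (t - 1) := by simp only [hsplit]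
    _ ≤ ∑' i, a i * (∑' j, a j) ^ (t - 1) := by
        gcongr with i; exact ENNReal.le_tsum i
    _ = (∑' i, a i) ^ t := by rw [ENNReal.tsum_mul_right, hsplit]

end ENNReal

theorem eLpNorm_restrict_iUnion_le {α ε : Type*} [MeasurableSpace α] [ENorm ε] {μ : Measure α}
    {p : ℝ≥0∞} (hp : 1 ≤ p) (f : α → ε) (s : ℕ → Set α) :
    eLpNorm f p (μ.restrict (⋃ k, s k)) ≤ ∑' k, eLpNorm f p (μ.restrict (s k)) := by
  have hp0 : p ≠ 0 := (zero_lt_one.trans_le hp).ne'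
  rcases eq_or_ne p ∞ with rfl | hpt
  · simp only [eLpNorm_exponent_top, eLpNormEssSup]
    refine essSup_le_of_ae_le _ ((ae_restrict_iUnion_iff _ _).2 fun k => ?_)
    filter_upwards [ae_le_essSup (fun x => ‖f x‖ₑ) (μ := μ.restrict (s k))] with x hx
    exact hx.trans (ENNReal.le_tsum k)
  · have ht : 1 ≤ p.toReal := by
      simpa using ENNReal.toReal_mono hpt hp
    have ht0 : 0 < p.toReal := zero_lt_one.trans_le ht
    simp only [eLpNorm_eq_lintegral_rpow_enorm_toReal hp0 hpt]
    calc (∫⁻ x in ⋃ k, s k, ‖f x‖ₑ ^ p.toReal ∂μ) ^ (1 / p.toReal)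
        ≤ (∑' k, ((∫⁻ x in s k, ‖f x‖ₑ ^ p.toReal ∂μ) ^ (1 / p.toReal)) ^ p.toReal) ^
            (1 / p.toReal) := by
          gcongr
          refine (lintegral_iUnion_le _ _).trans_eq (tsum_congr fun k => ?_)
          rw [← ENNReal.rpow_mul, one_div_mul_cancel ht0.ne', ENNReal.rpow_one]
      _ ≤ ((∑' k, (∫⁻ x in s k, ‖f x‖ₑ ^ p.toReal ∂μ) ^ (1 / p.toReal)) ^ p.toReal) ^
            (1 / p.toReal) := by
          gcongr
          exact ENNReal.tsum_rpow_le_rpow_tsum ht _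
      _ = ∑' k, (∫⁻ x in s k, ‖f x‖ₑ ^ p.toReal ∂μ) ^ (1 / p.toReal) := by
          rw [← ENNReal.rpow_mul, mul_one_div_cancel ht0.ne', ENNReal.rpow_one]

theorem compl_ball_subset_iUnion_annulus {X : Type*} [PseudoMetricSpace X] (c : X) {R : ℝ}
    (hR : 0 < R) :
    (ball c R)ᶜ ⊆ ⋃ k : ℕ, ball c (2 ^ (k + 1) * R) \ ball c (2 ^ k * R) := by
  intro y hy
  have h1 : 1 ≤ dist y c / R := by
    rw [le_div_iff₀ hR, one_mul]; simpa using hy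
  obtain ⟨k, hk, hk1⟩ := exists_nat_pow_near h1 one_lt_two
  refine Set.mem_iUnion.2 ⟨k, ?_, ?_⟩
  · rw [mem_ball]; rwa [div_lt_iff₀ hR] at hk1
  · rw [mem_ball, not_lt]; rwa [le_div_iff₀ hR] at hk

theorem eLpNorm_mul_dist_rpow_neg_le {X : Type*} [PseudoMetricSpace X] [MeasurableSpace X]
    {μ : Measure X} {s : Set X} (hs : MeasurableSet s) {c : X} {ρ β : ℝ} (hρ : 0 < ρ)
    (hβ : 0 ≤ β) (hsρ : ∀ y ∈ s, ρ ≤ dist c y) (v : X → ℝ≥0∞) (p : ℝ≥0∞) :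
    eLpNorm (fun y => v y * ENNReal.ofReal (dist c y) ^ (-β)) p (μ.restrict s) ≤
      ENNReal.ofReal ρ ^ (-β) * eLpNorm v p (μ.restrict s) := by
  have hfin : ENNReal.ofReal ρ ^ (-β) ≠ ∞ :=
    ENNReal.rpow_ne_top_of_ne_zero (by simpa using hρ) ENNReal.ofReal_ne_top
  rw [← ENNReal.coe_toNNReal hfin]
  refine eLpNorm_le_nnreal_smul_eLpNorm_of_ae_le_mul'
    (ae_restrict_of_forall_mem hs fun y hy => ?_) p
  rw [ENNReal.coe_toNNReal hfin, enorm_eq_self, enorm_eq_self, mul_comm (v y),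
    ENNReal.rpow_neg, ENNReal.rpow_neg]
  gcongr
  exact hsρ y hy

theorem eLpNorm_compl_ball_le_tsum_annulus {X : Type*} [PseudoMetricSpace X] [MeasurableSpace X]
    [OpensMeasurableSpace X] {μ : Measure X} (c : X) {R β : ℝ} (hR : 0 < R) (hβ : 0 ≤ β)
    (v : X → ℝ≥0∞) {p : ℝ≥0∞} (hp : 1 ≤ p) :
    eLpNorm (fun y => v y * ENNReal.ofReal (dist c y) ^ (-β)) p (μ.restrict (ball c R)ᶜ) ≤
      ∑' k : ℕ, ENNReal.ofReal (2 ^ k * R) ^ (-β) *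
        eLpNorm v p (μ.restrict (ball c (2 ^ (k + 1) * R))) := by
  refine (eLpNorm_mono_measure _ (Measure.restrict_mono
    (compl_ball_subset_iUnion_annulus c hR) le_rfl)).trans
    ((eLpNorm_restrict_iUnion_le hp _ _).trans (ENNReal.tsum_le_tsum fun k => ?_))
  refine (eLpNorm_mul_dist_rpow_neg_le (measurableSet_ball.diff measurableSet_ball)
    (ρ := 2 ^ k * R) (by positivity) hβ (fun y hy => ?_) v p).trans ?_
  · simpa [dist_comm] using hy.2
  · gcongr
    exact Set.sdiff_subset

theorem eN_eq_eLpNorm {n : ℕ} {p : ℝ≥0∞} (hp : p ≠ 0) (f : E n → ℝ≥0∞) (μ : Measure (E n)) :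
    eN p f μ = eLpNorm f p μ := by
  rcases eq_or_ne p ∞ with rfl | hpt
  · simp [eN, eLpNorm_exponent_top, eLpNormEssSup]
  · simp [eN, hpt, eLpNorm_eq_lintegral_rpow_enorm_toReal hp hpt]

def unitBallVolume (n : ℕ) : ℝ := √Real.pi ^ n / Real.Gamma (n / 2 + 1)

theorem unitBallVolume_pos (n : ℕ) : 0 < unitBallVolume n := by
  unfold unitBallVolume
  have := Real.Gamma_pos_of_pos (s := (n : ℝ) / 2 + 1) (by positivity)
  positivity

theorem volume_ball_eq_ofReal_unitBallVolume {n : ℕ} (hn : n ≠ 0) (c : E n) {ρ : ℝ}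
    (hρ : 0 ≤ ρ) :
    volume (ball c ρ) = ENNReal.ofReal (unitBallVolume n * ρ ^ n) := by
  have : Nonempty (Fin n) := ⟨⟨0, Nat.pos_of_ne_zero hn⟩⟩
  rw [EuclideanSpace.volume_ball, Fintype.card_fin, ← ENNReal.ofReal_pow hρ,
    ← ENNReal.ofReal_mul (by positivity), mul_comm]
  rfl

theorem LocalCond.eLpNorm_restrict_ball_le {n : ℕ} {r r' : ℝ≥0∞} {αt δt : ℝ}
    {v w : E n → ℝ≥0∞} {C : ℝ≥0∞} (hconj : r⁻¹ + r'⁻¹ = 1)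
    (hL : LocalCond n r r' αt δt v w C) (c : E n) {ρ : ℝ} (hρ : 0 < ρ) :
    essSup (fun y => (w y)⁻¹) (volume.restrict (ball c ρ)) *
        volume (ball c ρ) ^ ((αt - δt) / n - 1) * eLpNorm v r' (volume.restrict (ball c ρ))
      ≤ C := by
  have hV0 : volume (ball c ρ) ≠ 0 := (measure_ball_pos volume c hρ).ne'
  have hVt : volume (ball c ρ) ≠ ∞ := measure_ball_lt_top.ne
  have hr'0 : r' ≠ 0 := by rintro rfl; simp at hconj
  have hexp : r⁻¹.toReal + (1 / r').toReal = 1 := by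
    rw [one_div, ← ENNReal.toReal_add (ne_top_of_le_ne_top one_ne_top (hconj ▸ le_self_add))
      (ne_top_of_le_ne_top one_ne_top (hconj ▸ le_add_self)), hconj, toReal_one]
  have h := hL c ρ hρ
  rw [eN_eq_eLpNorm hr'0, eLpNorm_smul_measure_of_ne_zero (ENNReal.inv_ne_zero.2 hVt),
    smul_eq_mul, ENNReal.inv_rpow, ← ENNReal.rpow_neg] at h
  calc _ = essSup (fun y => (w y)⁻¹) (volume.restrict (ball c ρ)) *
        (volume (ball c ρ) ^ ((αt - δt) / n - r⁻¹.toReal) *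
          volume (ball c ρ) ^ (-(1 / r').toReal)) *
        eLpNorm v r' (volume.restrict (ball c ρ)) := by
        rw [← ENNReal.rpow_add _ _ hV0 hVt]; congr 3; linarith
    _ = _ := by ring
    _ ≤ C := h

-- The powers of `R` agree because `(δ - δt) - (n - αt + δ) = (αt - δt) - n`.
theorem rpow_ballVolume_mul_rpow_dyadic_eq {n : ℕ} (hn : n ≠ 0) {κ R : ℝ} (hκ : 0 < κ)
    (hR : 0 < R) (αt δ δt : ℝ) (k : ℕ) :
    (κ * R ^ n) ^ ((δ - δt) / n) * (2 ^ k * R) ^ (-(n - αt + δ)) =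
      (κ * (2 ^ (k + 1) * R) ^ n) ^ ((αt - δt) / n - 1) *
        (2 ^ (n - αt + δt) * κ ^ ((n - αt + δ) / n) * (2 ^ (-(δ - δt))) ^ k) := by
  have hn' : (n : ℝ) ≠ 0 := Nat.cast_ne_zero.2 hn
  apply Real.log_injOn_pos (Set.mem_Ioi.2 (by positivity)) (Set.mem_Ioi.2 (by positivity))
  simp (disch := positivity) only [Real.log_mul, Real.log_rpow, Real.log_pow]
  field_simp
  push_cast
  ring

theorem volume_ball_rpow_mul_rpow_dyadic_eq {n : ℕ} (hn : n ≠ 0) (c : E n) {R : ℝ} (hR : 0 < R)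
    (αt δ δt : ℝ) (k : ℕ) :
    volume (ball c R) ^ ((δ - δt) / n) * ENNReal.ofReal (2 ^ k * R) ^ (-(n - αt + δ)) =
      volume (ball c (2 ^ (k + 1) * R)) ^ ((αt - δt) / n - 1) *
        ENNReal.ofReal (2 ^ (n - αt + δt) * unitBallVolume n ^ ((n - αt + δ) / n) *
          (2 ^ (-(δ - δt))) ^ k) := by
  have hκ := unitBallVolume_pos n
  rw [volume_ball_eq_ofReal_unitBallVolume hn c hR.le,
    volume_ball_eq_ofReal_unitBallVolume hn c (by positivity),
    ENNReal.ofReal_rpow_of_pos (by positivity), ENNReal.ofReal_rpow_of_pos (by positivity),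
    ENNReal.ofReal_rpow_of_pos (by positivity), ← ENNReal.ofReal_mul (by positivity),
    ← ENNReal.ofReal_mul (by positivity), rpow_ballVolume_mul_rpow_dyadic_eq hn hκ hR]

theorem LocalCond.dyadic_term_le {n : ℕ} (hn : n ≠ 0) {r r' : ℝ≥0∞} {αt δ δt : ℝ}
    {v w : E n → ℝ≥0∞} {C : ℝ≥0∞} (hconj : r⁻¹ + r'⁻¹ = 1)
    (hL : LocalCond n r r' αt δt v w C) (c : E n) {R : ℝ} (hR : 0 < R) (k : ℕ) :
    essSup (fun y => (w y)⁻¹) (volume.restrict (ball c R)) *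
        (volume (ball c R) ^ ((δ - δt) / n) * ENNReal.ofReal (2 ^ k * R) ^ (-(n - αt + δ))) *
        eLpNorm v r' (volume.restrict (ball c (2 ^ (k + 1) * R)))
      ≤ C * ENNReal.ofReal (2 ^ (n - αt + δt) * unitBallVolume n ^ ((n - αt + δ) / n) *
          (2 ^ (-(δ - δt))) ^ k) := by
  have hball : ball c R ⊆ ball c (2 ^ (k + 1) * R) :=
    ball_subset_ball (le_mul_of_one_le_left hR.le (one_le_pow₀ one_le_two))
  rw [volume_ball_rpow_mul_rpow_dyadic_eq hn c hR, ← mul_assoc]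
  calc _ ≤ essSup (fun y => (w y)⁻¹) (volume.restrict (ball c (2 ^ (k + 1) * R))) *
        volume (ball c (2 ^ (k + 1) * R)) ^ ((αt - δt) / n - 1) *
        ENNReal.ofReal (2 ^ (n - αt + δt) * unitBallVolume n ^ ((n - αt + δ) / n) *
          (2 ^ (-(δ - δt))) ^ k) *
        eLpNorm v r' (volume.restrict (ball c (2 ^ (k + 1) * R))) := by
        gcongr
        exact essSup_mono_measure' (Measure.restrict_mono hball le_rfl)
    _ ≤ _ := by
        rw [mul_right_comm]
        gcongr
        exact hL.eLpNorm_restrict_ball_le hconj c (by positivity)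

theorem statement3_general (n m : ℕ) (α δ δt αt : ℝ) (r r' : ℝ≥0∞)
    (hn : 1 ≤ n) (hδ0 : 0 < δ)
    (hmδ : (m : ℝ) * δ < (n : ℝ) - α) (hαt : αt = (m : ℝ) * δ + α)
    (hconj : r⁻¹ + r'⁻¹ = 1) (hδt : δt < δ) :
    ∃ c : ℝ≥0, 0 < c ∧
      ∀ (v w : E n → ℝ≥0∞), Measurable v → Measurable w → ∀ C : ℝ≥0,
        LocalCond n r r' αt δt v w (C : ℝ≥0∞) →
          GlobalCond n r' αt δ δt v w ((c : ℝ≥0∞) * C) := by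
  have hn0 : n ≠ 0 := by omega
  set K : ℝ := 2 ^ ((n : ℝ) - αt + δt) * unitBallVolume n ^ (((n : ℝ) - αt + δ) / n)
  set q : ℝ := 2 ^ (-(δ - δt))
  have hK : 0 < K := by have := unitBallVolume_pos n; positivity
  have hq : q < 1 := Real.rpow_lt_one_of_one_lt_of_neg one_lt_two (by linarith)
  have hsum : HasSum (fun k : ℕ => K * q ^ k) (K / (1 - q)) := by
    simpa [div_eq_mul_inv] using (hasSum_geometric_of_lt_one (by positivity) hq).mul_left K
  have hβ : 0 ≤ (n : ℝ) - αt + δ := by rw [hαt]; linarith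
  have hr' : 1 ≤ r' := ENNReal.inv_le_one.1 (hconj ▸ le_add_self)
  refine ⟨(K / (1 - q)).toNNReal, by simpa using div_pos hK (sub_pos.2 hq),
    fun v w _ _ C hL c R hR => ?_⟩
  rw [eN_eq_eLpNorm (one_pos.trans_le hr').ne']
  calc _ ≤ essSup (fun y => (w y)⁻¹) (volume.restrict (ball c R)) *
        volume (ball c R) ^ ((δ - δt) / n) *
        ∑' k : ℕ, ENNReal.ofReal (2 ^ k * R) ^ (-((n : ℝ) - αt + δ)) *
          eLpNorm v r' (volume.restrict (ball c (2 ^ (k + 1) * R))) := by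
        gcongr
        exact eLpNorm_compl_ball_le_tsum_annulus c hR hβ v hr'
    _ = ∑' k : ℕ, essSup (fun y => (w y)⁻¹) (volume.restrict (ball c R)) *
          (volume (ball c R) ^ ((δ - δt) / n) *
            ENNReal.ofReal (2 ^ k * R) ^ (-((n : ℝ) - αt + δ))) *
          eLpNorm v r' (volume.restrict (ball c (2 ^ (k + 1) * R))) := by
        rw [← ENNReal.tsum_mul_left]
        exact tsum_congr fun k => by ring
    _ ≤ ∑' k : ℕ, C * ENNReal.ofReal (K * q ^ k) :=
        ENNReal.tsum_le_tsum fun k => hL.dyadic_term_le hn0 hconj c hR k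
    _ = _ := by
        rw [ENNReal.tsum_mul_left, ← ENNReal.ofReal_tsum_of_nonneg (fun k => by positivity)
          hsum.summable, hsum.tsum_eq, mul_comm]
        rfl

/-- for `δ̃ < δ`, the local condition (L) implies the global
condition (G), quantitatively. -/
theorem statement3 (n m : ℕ) (α δ δt αt : ℝ) (r r' : ℝ≥0∞)
    (hn : 1 ≤ n) (hα0 : 0 ≤ α) (hαn : α < (n : ℝ)) (hδ0 : 0 < δ) (hδ1 : δ < 1)
    (hmδ : (m : ℝ) * δ < (n : ℝ) - α) (hαt : αt = (m : ℝ) * δ + α)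
    (hr : 1 ≤ r) (hconj : r⁻¹ + r'⁻¹ = 1) (hδt : δt < δ) :
    ∃ c : ℝ≥0, 0 < c ∧
      ∀ (v w : E n → ℝ≥0∞), Measurable v → Measurable w → ∀ C : ℝ≥0,
        LocalCond n r r' αt δt v w (C : ℝ≥0∞) →
          GlobalCond n r' αt δ δt v w ((c : ℝ≥0∞) * C) :=
  statement3_general n m α δ δt αt r r' hn hδ0 hmδ hαt hconj hδt
end
end

section
/- Let n ≥ 1, m ∈ ℕ ∪ {0}, 0 ≤ α < n, 0 < δ < 1 with mδ < n − α, α̃ = mδ + α, and let 1 < r ≤ ∞ satisfy α̃ − n < δ < α̃ − n/r (with n/∞ = 0). Set δ̃ = δ, w ≡ 1 and v(x) = |x|^(n/r − α̃ + δ). Then the pair (v,w) satisfies the local condition (L) for some finite constant, but it fails the global condition (G): for every R > 0 and the ball B = B(0,R), ∫_{ℝⁿ∖B} v(y)^{r'} |y|^{−r'(n−α̃+δ)} dy = ∫_{|y|>R} |y|^{−n} dy = ∞. In particular, (v,w) does not belong to H(r, α̃, δ), so when δ̃ = δ the class H(r, α̃, δ̃) is not characterized by the local condition alone. -/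
open MeasureTheory Metric ENNReal NNReal

noncomputable section

/-!
The weight `|x|^s` is homogeneous, so a dilation gives
`∫_{B(0,R)} |x|^s = R^(n+s) ∫_{B(0,1)} |x|^s`, which is finite for `s > -n`; off `B(0,R)` one has
`|x|^s ≤ R^s` when `s ≤ 0`, so every ball `B(c,R)` carries at most a constant times `R^(n+s)`,
and in (L) the powers of `R` cancel. In (G), raising to the conjugate exponent turns the integrand
into exactly `|y|^(-n)`. Its integral `J` over `|y| ≥ R` is dilation invariant, and splitting off
the annulus `1 ≤ |y| < 2` gives `J ≥ c + J` with `c > 0`, so `J = ∞`. Far from the ball the kernel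
of `H` is comparable with that of (G), so `H` fails too.
-/

open Module
open scoped Pointwise

namespace ENNReal

theorem rpow_le_rpow_of_nonpos {x y : ℝ≥0∞} {z : ℝ} (hxy : x ≤ y) (hz : z ≤ 0) :
    y ^ z ≤ x ^ z := by
  rw [← neg_neg z, rpow_neg y, rpow_neg x]
  exact ENNReal.inv_le_inv.mpr (rpow_le_rpow hxy (neg_nonneg.mpr hz))

theorem ofReal_mul_rpow {t x : ℝ} (ht : 0 ≤ t) (z : ℝ) :
    ENNReal.ofReal (t * x) ^ z = ENNReal.ofReal t ^ z * ENNReal.ofReal x ^ z := by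
  rw [ofReal_mul ht, mul_rpow_of_ne_top ofReal_ne_top ofReal_ne_top]

end ENNReal

theorem Set.smul_set_compl₀ {G₀ α : Type*} [GroupWithZero G₀] [MulAction G₀ α] {a : G₀}
    (ha : a ≠ 0) (s : Set α) : a • sᶜ = (a • s)ᶜ := by
  ext x
  simp only [Set.mem_smul_set_iff_inv_smul_mem₀ ha, Set.mem_compl_iff]

section Scaling

variable {V : Type*} [NormedAddCommGroup V] [NormedSpace ℝ V] [FiniteDimensional ℝ V]
  [MeasurableSpace V] [BorelSpace V] (μ : Measure V) [μ.IsAddHaarMeasure]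

theorem setLIntegral_smul_set {t : ℝ} (ht : 0 < t) (f : V → ℝ≥0∞) (S : Set V) :
    ∫⁻ x in t • S, f x ∂μ = ENNReal.ofReal (t ^ finrank ℝ V) * ∫⁻ x in S, f (t • x) ∂μ := by
  have htd : 0 < t ^ finrank ℝ V := by positivity
  have hmp : MeasurePreserving (t • ·) μ (ENNReal.ofReal |(t ^ finrank ℝ V)⁻¹| • μ) :=
    ⟨measurable_const_smul t, Measure.map_addHaar_smul μ ht.ne'⟩
  rw [hmp.setLIntegral_comp_emb (MeasurableEquiv.smul₀ t ht.ne').measurableEmbedding,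
    Set.image_smul, Measure.restrict_smul, lintegral_smul_measure, smul_eq_mul, ← mul_assoc,
    abs_of_pos (inv_pos.mpr htd), ← ofReal_mul htd.le, mul_inv_cancel₀ htd.ne', ofReal_one,
    one_mul]

theorem setLIntegral_smul_set_rpow_norm {t : ℝ} (ht : 0 < t) (s : ℝ) (S : Set V) :
    ∫⁻ x in t • S, ENNReal.ofReal ‖x‖ ^ s ∂μ
      = ENNReal.ofReal t ^ (finrank ℝ V + s) * ∫⁻ x in S, ENNReal.ofReal ‖x‖ ^ s ∂μ := by
  have ht0 : ENNReal.ofReal t ≠ 0 := (ofReal_pos.mpr ht).ne'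
  have hts : ENNReal.ofReal t ^ s ≠ ∞ := rpow_ne_top_of_ne_zero ht0 ofReal_ne_top
  rw [setLIntegral_smul_set μ ht]
  simp_rw [norm_smul, Real.norm_of_nonneg ht.le, ENNReal.ofReal_mul_rpow ht.le]
  rw [lintegral_const_mul' _ _ hts, ← mul_assoc, ofReal_pow ht.le, ← ENNReal.rpow_natCast,
    ← rpow_add _ _ ht0 ofReal_ne_top]

theorem setLIntegral_ball_zero_rpow_norm {R : ℝ} (hR : 0 < R) (s : ℝ) :
    ∫⁻ x in ball (0 : V) R, ENNReal.ofReal ‖x‖ ^ s ∂μ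
      = ENNReal.ofReal R ^ (finrank ℝ V + s)
        * ∫⁻ x in ball (0 : V) 1, ENNReal.ofReal ‖x‖ ^ s ∂μ := by
  rw [← smul_unitBall_of_pos hR, setLIntegral_smul_set_rpow_norm μ hR]

variable [Nontrivial V]

theorem addHaar_ball_eq_rpow (c : V) {R : ℝ} (hR : 0 < R) :
    μ (ball c R) = ENNReal.ofReal R ^ (finrank ℝ V : ℝ) * μ (ball 0 1) := by
  rw [Measure.addHaar_ball μ c hR.le, ofReal_pow hR.le, ENNReal.rpow_natCast]

theorem setLIntegral_unitBall_rpow_norm_lt_top {s : ℝ} (hs : -(finrank ℝ V : ℝ) < s) :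
    ∫⁻ x in ball (0 : V) 1, ENNReal.ofReal ‖x‖ ^ s ∂μ < ∞ := by
  have hint : IntegrableOn (fun x : V => ‖x‖ ^ s) (ball 0 1) μ :=
    integrableOn_ball_of_norm_le_rpow (C := 1) (α := -s) Module.finrank_pos (by linarith)
      (ae_of_all _ fun x => by simp [abs_of_nonneg (Real.rpow_nonneg (norm_nonneg x) s)])
      (measurable_norm.pow_const s).aestronglyMeasurable
  -- The integrands differ only at `0`, where `0 ^ s` is `∞` in `ℝ≥0∞` but `0` in `ℝ`.
  refine lt_of_eq_of_lt (lintegral_congr_ae ?_) hint.2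
  filter_upwards [ae_restrict_of_ae (μ.ae_ne 0)] with x hx
  rw [Real.enorm_of_nonneg (Real.rpow_nonneg (norm_nonneg x) s),
    ENNReal.ofReal_rpow_of_pos (norm_pos_iff.mpr hx)]

theorem setLIntegral_ball_rpow_norm_le {s : ℝ} (hs : s ≤ 0) (c : V) {R : ℝ} (hR : 0 < R) :
    ∫⁻ x in ball c R, ENNReal.ofReal ‖x‖ ^ s ∂μ ≤
      (∫⁻ x in ball (0 : V) 1, ENNReal.ofReal ‖x‖ ^ s ∂μ + μ (ball 0 1))
        * ENNReal.ofReal R ^ (finrank ℝ V + s) := by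
  have hR0 : ENNReal.ofReal R ≠ 0 := (ofReal_pos.mpr hR).ne'
  have hfar : ∀ x ∈ ball c R \ ball 0 R, ENNReal.ofReal ‖x‖ ^ s ≤ ENNReal.ofReal R ^ s :=
    fun x hx => ENNReal.rpow_le_rpow_of_nonpos
      (ofReal_le_ofReal (not_lt.mp (mt mem_ball_zero_iff.mpr hx.2))) hs
  calc ∫⁻ x in ball c R, ENNReal.ofReal ‖x‖ ^ s ∂μ
      = ∫⁻ x in ball c R ∩ ball 0 R, ENNReal.ofReal ‖x‖ ^ s ∂μ
          + ∫⁻ x in ball c R \ ball 0 R, ENNReal.ofReal ‖x‖ ^ s ∂μ :=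
        (lintegral_inter_add_sdiff _ _ measurableSet_ball).symm
    _ ≤ ∫⁻ x in ball 0 R, ENNReal.ofReal ‖x‖ ^ s ∂μ + ∫⁻ _ in ball c R, ENNReal.ofReal R ^ s ∂μ :=
        add_le_add (lintegral_mono_set Set.inter_subset_right)
          ((setLIntegral_mono' (measurableSet_ball.diff measurableSet_ball) hfar).trans
            (lintegral_mono_set Set.sdiff_subset))
    _ = _ := by
        rw [setLIntegral_ball_zero_rpow_norm μ hR, setLIntegral_const, addHaar_ball_eq_rpow μ c hR,
          ← mul_assoc, ← rpow_add _ _ hR0 ofReal_ne_top, add_comm s]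
        ring

theorem setLIntegral_compl_ball_rpow_neg_finrank_eq_top {R : ℝ} (hR : 0 < R) :
    ∫⁻ x in (ball (0 : V) R)ᶜ, ENNReal.ofReal ‖x‖ ^ (-(finrank ℝ V : ℝ)) ∂μ = ∞ := by
  set J : ℝ → ℝ≥0∞ :=
    fun R => ∫⁻ x in (ball (0 : V) R)ᶜ, ENNReal.ofReal ‖x‖ ^ (-(finrank ℝ V : ℝ)) ∂μ
  have hJ : ∀ R, 0 < R → J R = J 1 := fun R hR => by
    simp only [J]
    rw [← smul_unitBall_of_pos hR, ← Set.smul_set_compl₀ hR.ne',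
      setLIntegral_smul_set_rpow_norm μ hR, add_neg_cancel, ENNReal.rpow_zero, one_mul]
  set S := (ball (0 : V) 1)ᶜ ∩ ball 0 2
  have hS : 0 < ∫⁻ x in S, ENNReal.ofReal ‖x‖ ^ (-(finrank ℝ V : ℝ)) ∂μ := by
    obtain ⟨x, hx⟩ := exists_norm_eq V (by norm_num : (0 : ℝ) ≤ 3 / 2)
    have hμS : 0 < μ S := by
      refine ((isOpen_ball.sdiff isClosed_closedBall).measure_pos μ ⟨x, ?_⟩).trans_le
        (measure_mono fun y hy => ⟨fun h => hy.2 (ball_subset_closedBall h), hy.1⟩)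
      simp only [Set.mem_sdiff, mem_ball_zero_iff, mem_closedBall_zero_iff, hx]
      norm_num
    calc 0 < ENNReal.ofReal 2 ^ (-(finrank ℝ V : ℝ)) * μ S :=
          ENNReal.mul_pos (rpow_pos (by simp) ofReal_ne_top).ne' hμS.ne'
      _ = ∫⁻ _ in S, ENNReal.ofReal 2 ^ (-(finrank ℝ V : ℝ)) ∂μ := (setLIntegral_const _ _).symm
      _ ≤ ∫⁻ x in S, ENNReal.ofReal ‖x‖ ^ (-(finrank ℝ V : ℝ)) ∂μ :=
          setLIntegral_mono' (measurableSet_ball.compl.inter measurableSet_ball) fun x hx =>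
            ENNReal.rpow_le_rpow_of_nonpos (ofReal_le_ofReal (mem_ball_zero_iff.mp hx.2).le)
              (by simp)
  have hsplit : ∫⁻ x in S, ENNReal.ofReal ‖x‖ ^ (-(finrank ℝ V : ℝ)) ∂μ + J 2 ≤ J 1 := by
    calc _ ≤ ∫⁻ x in S, ENNReal.ofReal ‖x‖ ^ (-(finrank ℝ V : ℝ)) ∂μ
          + ∫⁻ x in (ball (0 : V) 1)ᶜ \ ball 0 2, ENNReal.ofReal ‖x‖ ^ (-(finrank ℝ V : ℝ)) ∂μ :=
          add_le_add le_rfl (lintegral_mono_set fun y (hy : y ∉ ball 0 2) =>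
            ⟨fun h => hy (ball_subset_ball one_le_two h), hy⟩)
      _ = J 1 := lintegral_inter_add_sdiff _ _ measurableSet_ball
  rw [hJ 2 two_pos] at hsplit
  show J R = ∞
  rw [hJ R hR]
  by_contra hfin
  exact hS.ne' (nonpos_iff_eq_zero.mp
    (ENNReal.le_of_add_le_add_right hfin (by simpa using hsplit)))

theorem setLIntegral_compl_ball_eq_top_of_le {R : ℝ} (hR : 0 < R) {c : ℝ≥0∞} (hc : c ≠ 0)
    {f : V → ℝ≥0∞} (hf : ∀ x, R ≤ ‖x‖ → c * ENNReal.ofReal ‖x‖ ^ (-(finrank ℝ V : ℝ)) ≤ f x) :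
    ∫⁻ x in (ball (0 : V) R)ᶜ, f x ∂μ = ∞ := by
  refine top_le_iff.mp ?_
  calc ∞ = c * ∫⁻ x in (ball (0 : V) R)ᶜ, ENNReal.ofReal ‖x‖ ^ (-(finrank ℝ V : ℝ)) ∂μ := by
        rw [setLIntegral_compl_ball_rpow_neg_finrank_eq_top μ hR, mul_top hc]
    _ ≤ ∫⁻ x in (ball (0 : V) R)ᶜ, c * ENNReal.ofReal ‖x‖ ^ (-(finrank ℝ V : ℝ)) ∂μ :=
        lintegral_const_mul_le _ _
    _ ≤ ∫⁻ x in (ball (0 : V) R)ᶜ, f x ∂μ :=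
        setLIntegral_mono' measurableSet_ball.compl fun x hx =>
          hf x (not_lt.mp (mt mem_ball_zero_iff.mpr hx))

end Scaling

theorem nontrivial_E {n : ℕ} (hn : 1 ≤ n) : Nontrivial (E n) :=
  have : Nonempty (Fin n) := ⟨⟨0, hn⟩⟩
  inferInstance

theorem ENNReal.toReal_inv_add_inv_toReal_of_one_lt {r r' : ℝ≥0∞} (hr : 1 < r)
    (hconj : r⁻¹ + r'⁻¹ = 1) : 0 < r'.toReal ∧ r⁻¹.toReal + r'.toReal⁻¹ = 1 := by
  have : r.HolderConjugate r' := holderConjugate_iff.mpr hconj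
  have hr' : r' ≠ ∞ := ((HolderConjugate.lt_top_iff_one_lt r' r).mpr hr).ne
  have hr'0 : r' ≠ 0 := HolderConjugate.ne_zero r' r
  refine ⟨toReal_pos hr'0 hr', ?_⟩
  rw [← toReal_inv, ← toReal_add (inv_ne_top.mpr (HolderConjugate.ne_zero r r'))
    (inv_ne_top.mpr hr'0), hconj, toReal_one]

-- The value of (L) on a ball of radius `X`, once the integral is bounded by `K X^(d+s)`.
theorem ENNReal.rpow_mul_inv_mul_rpow_eq {ι K X : ℝ≥0∞} (hι : ι ≠ ∞) (hX0 : X ≠ 0) (hX : X ≠ ∞)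
    {d P s q : ℝ} (hq : 0 ≤ q) (h : d * P + s * q = 0) :
    (X ^ d * ι) ^ P * ((X ^ d * ι)⁻¹ * (K * X ^ (d + s))) ^ q = ι ^ P * (ι⁻¹ * K) ^ q := by
  have hXd0 : X ^ d ≠ 0 := (rpow_pos (pos_iff_ne_zero.mpr hX0) hX).ne'
  have hXd : X ^ d ≠ ∞ := rpow_ne_top_of_ne_zero hX0 hX
  rw [ENNReal.mul_inv (Or.inl hXd0) (Or.inl hXd), ← rpow_neg,
    show X ^ (-d) * ι⁻¹ * (K * X ^ (d + s)) = ι⁻¹ * K * (X ^ (-d) * X ^ (d + s)) by ring,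
    ← rpow_add _ _ hX0 hX, neg_add_cancel_left, mul_rpow_of_nonneg _ _ hq,
    mul_rpow_of_ne_top hXd hι, ← rpow_mul, ← rpow_mul,
    show X ^ (d * P) * ι ^ P * ((ι⁻¹ * K) ^ q * X ^ (s * q))
      = ι ^ P * (ι⁻¹ * K) ^ q * (X ^ (d * P) * X ^ (s * q)) by ring,
    ← rpow_add _ _ hX0 hX, h, ENNReal.rpow_zero, mul_one]

theorem localCond_rpow_norm {n : ℕ} (hn : 1 ≤ n) {r r' : ℝ≥0∞} (hr : 1 < r)
    (hconj : r⁻¹ + r'⁻¹ = 1) {αt δt : ℝ} (hlow : αt - n < δt)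
    (hhigh : δt < αt - n * r⁻¹.toReal) :
    ∃ C : ℝ≥0, LocalCond n r r' αt δt
      (fun x => ENNReal.ofReal ‖x‖ ^ ((n : ℝ) * r⁻¹.toReal - αt + δt)) (fun _ => 1) C := by
  have := nontrivial_E hn
  obtain ⟨hq, hsum⟩ := ENNReal.toReal_inv_add_inv_toReal_of_one_lt hr hconj
  have hr' : r' ≠ ∞ := fun h => by simp [h] at hq
  set q := r'.toReal with hq_def
  set a := (n : ℝ) * r⁻¹.toReal - αt + δt
  set P := (αt - δt) / n - r⁻¹.toReal
  have hs0 : a * q ≤ 0 := mul_nonpos_of_nonpos_of_nonneg (by linarith) hq.le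
  have hsn : -(n : ℝ) < a * q := by
    have hρq : r⁻¹.toReal * q = q - 1 := by
      field_simp at hsum
      linarith
    have hnq : a * q + n = (n - αt + δt) * q := by
      simp only [a]
      linear_combination (n : ℝ) * hρq
    linarith [mul_pos (show (0 : ℝ) < n - αt + δt by linarith) hq]
  have hP : n * P + a * q * (1 / q) = 0 := by
    have : (n : ℝ) ≠ 0 := by positivity
    simp only [P, a]
    field_simp
    ring
  set ι := volume (ball (0 : E n) 1)
  set K := (∫⁻ x in ball (0 : E n) 1, ENNReal.ofReal ‖x‖ ^ (a * q)) + ι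
  have hι0 : ι ≠ 0 := (measure_ball_pos volume 0 one_pos).ne'
  have hι : ι ≠ ∞ := measure_ball_lt_top.ne
  have hK : K ≠ ∞ := add_ne_top.mpr ⟨(setLIntegral_unitBall_rpow_norm_lt_top (V := E n)
    (s := a * q) volume (by rwa [finrank_euclideanSpace_fin])).ne, hι⟩
  have hC : ι ^ P * (ι⁻¹ * K) ^ (1 / q) ≠ ∞ := mul_ne_top (rpow_ne_top_of_ne_zero hι0 hι)
    (rpow_ne_top_of_nonneg (by positivity) (mul_ne_top (inv_ne_top.mpr hι0) hK))
  refine ⟨(ι ^ P * (ι⁻¹ * K) ^ (1 / q)).toNNReal, fun c R hR => ?_⟩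
  have hess : essSup (fun _ : E n => (1 : ℝ≥0∞)⁻¹) (volume.restrict (ball c R)) ≤ 1 :=
    essSup_le_of_ae_le _ (ae_of_all _ fun _ => inv_one.le)
  have hR0 : ENNReal.ofReal R ≠ 0 := (ofReal_pos.mpr hR).ne'
  simp only [eN, if_neg hr', lintegral_smul_measure, smul_eq_mul, ← ENNReal.rpow_mul, ← hq_def]
  rw [coe_toNNReal hC]
  calc _ ≤ 1 * volume (ball c R) ^ P
        * ((volume (ball c R))⁻¹ * (K * ENNReal.ofReal R ^ ((n : ℝ) + a * q))) ^ (1 / q) := by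
        gcongr
        simpa only [finrank_euclideanSpace_fin] using
          setLIntegral_ball_rpow_norm_le volume hs0 c hR
    _ = _ := by
        rw [one_mul, addHaar_ball_eq_rpow volume c hR, finrank_euclideanSpace_fin]
        exact ENNReal.rpow_mul_inv_mul_rpow_eq hι hR0 ofReal_ne_top (by positivity) hP

theorem rpow_weight_mul_rpow_kernel_rpow_eq {n : ℕ} {ρ q αt δ : ℝ} (hq : 0 < q)
    (hsum : ρ + q⁻¹ = 1) {x : ℝ≥0∞} (hx0 : x ≠ 0) (hx : x ≠ ∞) :
    (x ^ ((n : ℝ) * ρ - αt + δ) * x ^ (-((n : ℝ) - αt + δ))) ^ q = x ^ (-(n : ℝ)) := by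
  rw [← rpow_add _ _ hx0 hx, ← ENNReal.rpow_mul]
  congr 1
  field_simp at hsum
  linear_combination (n : ℝ) * hsum

theorem not_hclass_rpow_norm {n : ℕ} (hn : 1 ≤ n) {r r' : ℝ≥0∞} (hr : 1 < r)
    (hconj : r⁻¹ + r'⁻¹ = 1) {αt δ : ℝ} (hlow : αt - n < δ) (C : ℝ≥0) :
    ¬ Hclass n r' αt δ δ (fun x => ENNReal.ofReal ‖x‖ ^ ((n : ℝ) * r⁻¹.toReal - αt + δ))
      (fun _ => 1) C := by
  have := nontrivial_E hn
  obtain ⟨hq, hsum⟩ := ENNReal.toReal_inv_add_inv_toReal_of_one_lt hr hconj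
  have hr' : r' ≠ ∞ := fun h => by simp [h] at hq
  set q := r'.toReal with hq_def
  set a := (n : ℝ) * r⁻¹.toReal - αt + δ
  set b := -((n : ℝ) - αt + δ)
  have hb : b ≤ 0 := by linarith
  set ι := volume (ball (0 : E n) 1)
  have hι0 : ι ≠ 0 := (measure_ball_pos volume 0 one_pos).ne'
  have hι : ι ≠ ∞ := measure_ball_lt_top.ne
  set T := ι ^ (1 / (n : ℝ))
  have hT : T ≠ ∞ := rpow_ne_top_of_ne_zero hι0 hι
  have hρ : 0 < T.toReal := toReal_pos (rpow_pos (pos_iff_ne_zero.mpr hι0) hι).ne' hT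
  have hc : ((2 : ℝ≥0∞) ^ b) ^ q ≠ 0 :=
    (rpow_pos (rpow_pos two_pos ofNat_ne_top)
      (rpow_ne_top_of_ne_zero two_ne_zero ofNat_ne_top)).ne'
  have hkernel : ∀ y : E n, T.toReal ≤ ‖y‖ →
      ((2 : ℝ≥0∞) ^ b) ^ q * ENNReal.ofReal ‖y‖ ^ (-(finrank ℝ (E n) : ℝ))
        ≤ (ENNReal.ofReal ‖y‖ ^ a * (T + ENNReal.ofReal (dist 0 y)) ^ b) ^ q := by
    intro y hy
    have hy0 : ENNReal.ofReal ‖y‖ ≠ 0 := (ofReal_pos.mpr (hρ.trans_le hy)).ne'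
    have hTy : T + ENNReal.ofReal (dist 0 y) ≤ 2 * ENNReal.ofReal ‖y‖ := by
      rw [dist_zero_left, two_mul, ← ofReal_toReal hT]
      gcongr
    calc ((2 : ℝ≥0∞) ^ b) ^ q * ENNReal.ofReal ‖y‖ ^ (-(finrank ℝ (E n) : ℝ))
        = ((2 : ℝ≥0∞) ^ b) ^ q * (ENNReal.ofReal ‖y‖ ^ a * ENNReal.ofReal ‖y‖ ^ b) ^ q := by
          rw [finrank_euclideanSpace_fin,
            rpow_weight_mul_rpow_kernel_rpow_eq hq hsum hy0 ofReal_ne_top]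
      _ = (ENNReal.ofReal ‖y‖ ^ a * (2 * ENNReal.ofReal ‖y‖) ^ b) ^ q := by
          rw [← mul_rpow_of_nonneg _ _ hq.le, mul_rpow_of_ne_top ofNat_ne_top ofReal_ne_top]
          ring_nf
      _ ≤ (ENNReal.ofReal ‖y‖ ^ a * (T + ENNReal.ofReal (dist 0 y)) ^ b) ^ q :=
          rpow_le_rpow (mul_le_mul_of_nonneg_left (ENNReal.rpow_le_rpow_of_nonpos hTy hb) zero_le)
            hq.le
  have hint :
      ∫⁻ y : E n, (ENNReal.ofReal ‖y‖ ^ a * (T + ENNReal.ofReal (dist 0 y)) ^ b) ^ q = ∞ :=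
    top_le_iff.mp ((setLIntegral_compl_ball_eq_top_of_le volume hρ hc hkernel).symm.le.trans
      (setLIntegral_le_lintegral _ _))
  intro hC
  have h : (∫⁻ y : E n, (ENNReal.ofReal ‖y‖ ^ a * (T + ENNReal.ofReal (dist 0 y)) ^ b) ^ q)
      ^ (1 / q) ≤ C := by
    simpa only [eN, if_neg hr', ← hq_def, sub_self, zero_div, ENNReal.rpow_zero, mul_one, one_mul,
      inv_one, essSup_const _ (Measure.restrict_eq_zero.not.mpr hι0)] using hC 0 1 one_pos
  rw [hint, top_rpow_of_pos (one_div_pos.mpr hq)] at h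
  exact coe_ne_top (top_le_iff.mp h)

theorem statement4_general (n : ℕ) (δ αt : ℝ) (r r' : ℝ≥0∞)
    (hn : 1 ≤ n) (hr : 1 < r) (hconj : r⁻¹ + r'⁻¹ = 1)
    (hlow : αt - (n : ℝ) < δ) (hhigh : δ < αt - (n : ℝ) * r⁻¹.toReal)
    (v w : E n → ℝ≥0∞)
    (hv : v = fun x => (ENNReal.ofReal ‖x‖) ^ ((n : ℝ) * r⁻¹.toReal - αt + δ))
    (hw : w = fun _ => 1) :
    (∃ C : ℝ≥0, LocalCond n r r' αt δ v w (C : ℝ≥0∞)) ∧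
    (∀ R : ℝ, 0 < R →
      (∫⁻ y in (ball (0 : E n) R)ᶜ,
        (v y * (ENNReal.ofReal ‖y‖) ^ (-((n : ℝ) - αt + δ))) ^ r'.toReal) = ∞) ∧
    (∀ C : ℝ≥0, ¬ Hclass n r' αt δ δ v w (C : ℝ≥0∞)) := by
  subst hv hw
  refine ⟨localCond_rpow_norm hn hr hconj hlow hhigh, fun R hR => ?_,
    not_hclass_rpow_norm hn hr hconj hlow⟩
  have := nontrivial_E hn
  obtain ⟨hq, hsum⟩ := ENNReal.toReal_inv_add_inv_toReal_of_one_lt hr hconj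
  refine setLIntegral_compl_ball_eq_top_of_le volume hR one_ne_zero fun y hy => ?_
  rw [one_mul, finrank_euclideanSpace_fin, rpow_weight_mul_rpow_kernel_rpow_eq hq hsum
    (ofReal_pos.mpr (hR.trans_le hy)).ne' ofReal_ne_top]

/-- for `δ̃ = δ` with `α̃ − n < δ < α̃ − n/r`, the pair
`w ≡ 1`, `v(x) = |x|^(n/r − α̃ + δ)` satisfies the local condition (L) but fails the
global condition (G) (the tail integral is infinite on every ball centered at the
origin), hence does not belong to `H(r, α̃, δ)`. -/
theorem statement4 (n m : ℕ) (α δ αt : ℝ) (r r' : ℝ≥0∞)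
    (hn : 1 ≤ n) (hα0 : 0 ≤ α) (hαn : α < (n : ℝ)) (hδ0 : 0 < δ) (hδ1 : δ < 1)
    (hmδ : (m : ℝ) * δ < (n : ℝ) - α) (hαt : αt = (m : ℝ) * δ + α)
    (hr : 1 < r) (hconj : r⁻¹ + r'⁻¹ = 1)
    (hlow : αt - (n : ℝ) < δ) (hhigh : δ < αt - (n : ℝ) * r⁻¹.toReal)
    (v w : E n → ℝ≥0∞)
    (hv : v = fun x => (ENNReal.ofReal ‖x‖) ^ ((n : ℝ) * r⁻¹.toReal - αt + δ))
    (hw : w = fun _ => 1) :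
    (∃ C : ℝ≥0, LocalCond n r r' αt δ v w (C : ℝ≥0∞)) ∧
    (∀ R : ℝ, 0 < R →
      (∫⁻ y in (ball (0 : E n) R)ᶜ,
        (v y * (ENNReal.ofReal ‖y‖) ^ (-((n : ℝ) - αt + δ))) ^ r'.toReal) = ∞) ∧
    (∀ C : ℝ≥0, ¬ Hclass n r' αt δ δ v w (C : ℝ≥0∞)) :=
  statement4_general n δ αt r r' hn hr hconj hlow hhigh v w hv hw
end
end

section
/- Let n ≥ 1, m ∈ ℕ ∪ {0}, 0 ≤ α < n, 0 < δ < 1 with mδ < n − α, α̃ = mδ + α, 1 ≤ r ≤ ∞, and let δ̃ ∈ ℝ satisfy δ̃ > δ or δ̃ > α̃ − n/r (with n/∞ = 0). If w is a locally integrable weight and the pair (v,w) belongs to H(r, α̃, δ̃), then v = 0 almost everywhere in ℝⁿ. -/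
open MeasureTheory Metric ENNReal NNReal Filter Topology

noncomputable section

lemma essSup_lower {α : Type*} [MeasurableSpace α] (g : α → ℝ≥0∞) (μ : Measure α)
    {a : ℝ≥0∞} {S : Set α} (hS0 : μ S ≠ 0) (hgs : ∀ y ∈ S, a ≤ g y) :
    a ≤ essSup g μ := by
  by_contra h
  have hae := ae_lt_of_essSup_lt (not_le.mp h)
  rw [ae_iff] at hae
  exact hS0 (measure_mono_null (fun y hy => by
    simp only [Set.mem_setOf_eq, not_lt]; exact hgs y hy) hae)

lemma eN_lower {n : ℕ} {r' : ℝ≥0∞} (hr' : 1 ≤ r') (f : E n → ℝ≥0∞) (μ : Measure (E n))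
    {S : Set (E n)} (hS : MeasurableSet S) (hS0 : μ S ≠ 0) {a : ℝ≥0∞}
    (hfa : ∀ y ∈ S, a ≤ f y) :
    a * (μ S) ^ (r'⁻¹.toReal) ≤ eN r' f μ := by
  rcases eq_or_ne r' ∞ with h | h
  · subst h
    simp only [eN, if_pos rfl, ENNReal.inv_top, ENNReal.toReal_zero, ENNReal.rpow_zero, mul_one]
    exact essSup_lower f μ hS0 hfa
  · have hr'0 : r' ≠ 0 := by intro h0; rw [h0] at hr'; simp at hr'
    have hp0 : 0 < r'.toReal := ENNReal.toReal_pos hr'0 h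
    set p := r'.toReal with hp
    have hq : r'⁻¹.toReal = 1 / p := by rw [ENNReal.toReal_inv, one_div]
    rw [eN, if_neg h, hq]
    have h1 : a ^ p * μ S ≤ ∫⁻ y, f y ^ p ∂μ := by
      calc a ^ p * μ S = ∫⁻ _ in S, a ^ p ∂μ := (setLIntegral_const S _).symm
        _ ≤ ∫⁻ y in S, f y ^ p ∂μ :=
            setLIntegral_mono' hS fun y hy => ENNReal.rpow_le_rpow (hfa y hy) hp0.le
        _ ≤ ∫⁻ y, f y ^ p ∂μ := setLIntegral_le_lintegral S _
    calc a * μ S ^ (1 / p) = (a ^ p * μ S) ^ (1 / p) := by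
          rw [ENNReal.mul_rpow_of_nonneg _ _ (by positivity : (0:ℝ) ≤ 1/p),
            ← ENNReal.rpow_mul, mul_one_div_cancel hp0.ne', ENNReal.rpow_one]
      _ ≤ (∫⁻ y, f y ^ p ∂μ) ^ (1 / p) := ENNReal.rpow_le_rpow h1 (by positivity)

lemma rpow_neg_antitone {x y : ℝ≥0∞} (hxy : x ≤ y) {d : ℝ} (hd : 0 ≤ d) :
    y ^ (-d) ≤ x ^ (-d) := by
  rw [ENNReal.rpow_neg, ENNReal.rpow_neg]
  exact ENNReal.inv_le_inv' (ENNReal.rpow_le_rpow hxy hd)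

lemma no_blowup {K : ℝ≥0∞} (hK : K ≠ 0) {e : ℝ} (he : e < 0) (C : ℝ≥0) {ρ : ℝ} (hρ : 0 < ρ)
    (h : ∀ R : ℝ, 0 < R → R ≤ ρ → K * ENNReal.ofReal R ^ e ≤ C) : False := by
  set d : ℝ := -e with hd
  have hd0 : 0 < d := by simp [hd]; linarith
  have hXne : ∀ R : ℝ, 0 < R → ENNReal.ofReal R ^ d ≠ 0 ∧ ENNReal.ofReal R ^ d ≠ ∞ := by
    intro R hR
    constructor
    · exact (ENNReal.rpow_pos (ENNReal.ofReal_pos.mpr hR) ENNReal.ofReal_ne_top).ne'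
    · exact ENNReal.rpow_ne_top_of_nonneg hd0.le ENNReal.ofReal_ne_top
  have hrw : ∀ R : ℝ, ENNReal.ofReal R ^ e = (ENNReal.ofReal R ^ d)⁻¹ := by
    intro R; rw [hd, ← ENNReal.rpow_neg, neg_neg]
  rcases eq_or_ne K ∞ with hKt | hKt
  · have h1 := h ρ hρ le_rfl
    rw [hKt, hrw, ENNReal.top_mul (by simpa using (hXne ρ hρ).2)] at h1
    exact (h1.trans_lt ENNReal.coe_lt_top).ne rfl
  · set η : ℝ≥0∞ := K / ((C : ℝ≥0∞) + 1) with hη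
    have hη0 : η ≠ 0 := by
      simp only [hη, ne_eq, ENNReal.div_eq_zero_iff, not_or]
      exact ⟨hK, by simp⟩
    have hηt : η ≠ ∞ := by
      simp only [hη, ne_eq, ENNReal.div_eq_top, not_or, not_and_or]
      exact ⟨Or.inr (by simp), Or.inl hKt⟩
    have hεpos : 0 < η.toReal := ENNReal.toReal_pos hη0 hηt
    set x0 : ℝ := (η.toReal / 2) ^ (1 / d) with hx0
    have hx0pos : 0 < x0 := Real.rpow_pos_of_pos (by linarith) _
    set R : ℝ := min ρ x0 with hR
    have hRpos : 0 < R := lt_min hρ hx0pos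
    have hRd : R ^ d < η.toReal := by
      have h1 : R ^ d ≤ x0 ^ d := Real.rpow_le_rpow hRpos.le (min_le_right _ _) hd0.le
      have h2 : x0 ^ d = η.toReal / 2 := by
        rw [hx0, ← Real.rpow_mul (by linarith), one_div_mul_cancel hd0.ne', Real.rpow_one]
      rw [h2] at h1; linarith
    have hXlt : ENNReal.ofReal R ^ d < η := by
      rw [ENNReal.ofReal_rpow_of_pos hRpos]
      rw [ENNReal.ofReal_lt_iff_lt_toReal (by positivity) hηt]
      exact hRd
    have hkey := h R hRpos (min_le_left _ _)
    rw [hrw] at hkey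
    set X := ENNReal.ofReal R ^ d with hX
    have hX0 := (hXne R hRpos).1
    have hXt := (hXne R hRpos).2
    have h3 : ((C : ℝ≥0∞) + 1) * X < K := ENNReal.mul_lt_of_lt_div' (by rwa [hη] at hXlt)
    have h4 : (C : ℝ≥0∞) + 1 ≤ K * X⁻¹ := by
      calc (C : ℝ≥0∞) + 1 = ((C : ℝ≥0∞) + 1) * X * X⁻¹ := by
            rw [mul_assoc, ENNReal.mul_inv_cancel hX0 hXt, mul_one]
        _ ≤ K * X⁻¹ := mul_le_mul_left h3.le _
    have h5 : (C : ℝ≥0∞) + 1 ≤ C := h4.trans hkey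
    have h6 : (C : ℝ≥0∞) < C + 1 := ENNReal.lt_add_right ENNReal.coe_ne_top one_ne_zero
    exact absurd (h5.trans_lt h6) (lt_irrefl _)

/-- if `δ̃ > δ` or `δ̃ > α̃ − n/r`, any pair `(v,w) ∈ H(r, α̃, δ̃)` with
`w` locally integrable has `v = 0` a.e. -/
theorem statement5 (n m : ℕ) (α δ δt αt : ℝ) (r r' : ℝ≥0∞)
    (hn : 1 ≤ n) (hα0 : 0 ≤ α) (hαn : α < (n : ℝ)) (hδ0 : 0 < δ) (hδ1 : δ < 1)
    (hmδ : (m : ℝ) * δ < (n : ℝ) - α) (hαt : αt = (m : ℝ) * δ + α)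
    (hr : 1 ≤ r) (hconj : r⁻¹ + r'⁻¹ = 1)
    (hδt : δ < δt ∨ αt - (n : ℝ) * r⁻¹.toReal < δt)
    (v w : E n → ℝ≥0∞) (hvm : Measurable v) (hwm : Measurable w)
    (hwloc : ∀ (c : E n) (R : ℝ), 0 < R → (∫⁻ y in ball c R, w y) < ∞)
    (C : ℝ≥0) (hH : Hclass n r' αt δ δt v w (C : ℝ≥0∞)) :
    ∀ᵐ x ∂(volume : Measure (E n)), v x = 0 := by
  classical
  by_contra hcon
  have hn0 : (0:ℝ) < (n:ℝ) := by exact_mod_cast hn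
  have hnne : (n:ℝ) ≠ 0 := hn0.ne'
  -- conjugate exponent facts
  have hrinvt : r⁻¹ ≤ 1 := ENNReal.inv_le_one.mpr hr
  have hr'invt : r'⁻¹ ≤ 1 := hconj ▸ le_add_self
  have hr'1 : 1 ≤ r' := ENNReal.inv_le_one.mp hr'invt
  have hsum : r⁻¹.toReal + r'⁻¹.toReal = 1 := by
    rw [← ENNReal.toReal_add (ne_top_of_le_ne_top ENNReal.one_ne_top hrinvt)
      (ne_top_of_le_ne_top ENNReal.one_ne_top hr'invt), hconj, ENNReal.toReal_one]
  set q : ℝ := r'⁻¹.toReal with hqdef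
  have hq0 : 0 ≤ q := ENNReal.toReal_nonneg
  set d : ℝ := (n:ℝ) - αt + δ with hddef
  have hd0 : 0 < d := by rw [hddef, hαt]; linarith
  set κ : ℝ≥0∞ := volume (ball (0 : E n) 1) with hκdef
  have hκ0 : κ ≠ 0 := (measure_ball_pos volume _ one_pos).ne'
  have hκt : κ ≠ ∞ := measure_ball_lt_top.ne
  have hκs : ∀ z : ℝ, κ ^ z ≠ 0 := by
    intro z h
    rcases ENNReal.rpow_eq_zero_iff.mp h with ⟨h1,_⟩|⟨h2,_⟩
    exacts [hκ0 h1, hκt h2]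
  have hball : ∀ (c : E n) (R : ℝ), 0 < R →
      volume (ball c R) = (ENNReal.ofReal R) ^ (n:ℕ) * κ := by
    intro c R hR
    rw [Measure.addHaar_ball_of_pos volume c hR,
      show Module.finrank ℝ (E n) = n from finrank_euclideanSpace_fin,
      ← ENNReal.ofReal_pow hR.le]
  -- find t with positive measure of {t ≤ v}
  have h0 : volume {x : E n | ¬ v x = 0} ≠ 0 := fun h => hcon (ae_iff.mpr h)
  obtain ⟨k, hk⟩ : ∃ k : ℕ, volume {x : E n | ((k:ℝ≥0∞))⁻¹ ≤ v x} ≠ 0 := by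
    by_contra hfa; push_neg at hfa
    apply h0
    refine measure_mono_null (fun x hx => ?_) (measure_iUnion_null hfa)
    obtain ⟨k, hk⟩ := ENNReal.exists_inv_nat_lt hx
    exact Set.mem_iUnion.mpr ⟨k, hk.le⟩
  set t : ℝ≥0∞ := ((k:ℝ≥0∞))⁻¹ with htdef
  have ht0 : t ≠ 0 := ENNReal.inv_ne_zero.mpr (ENNReal.natCast_ne_top k)
  -- localize in a big ball
  obtain ⟨N, hN⟩ : ∃ N : ℕ, volume ({x : E n | t ≤ v x} ∩ ball 0 ((N:ℝ)+1)) ≠ 0 := by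
    by_contra hfa; push_neg at hfa
    apply hk
    refine measure_mono_null (fun x hx => ?_) (measure_iUnion_null hfa)
    obtain ⟨N, hNx⟩ := exists_nat_gt (dist x (0:E n))
    exact Set.mem_iUnion.mpr ⟨N, hx, mem_ball.mpr (by push_cast; linarith)⟩
  -- find j bounding w
  have hwfin : volume ({y : E n | w y = ∞} ∩ ball (0:E n) ((N:ℝ)+1)) = 0 := by
    have h1 : ∀ᵐ y ∂(volume.restrict (ball (0:E n) ((N:ℝ)+1))), w y < ∞ :=
      ae_lt_top hwm (hwloc 0 ((N:ℝ)+1) (by positivity)).ne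
    rw [ae_iff] at h1
    rw [Measure.restrict_apply' measurableSet_ball] at h1
    convert h1 using 2
    ext y; simp [top_le_iff, eq_comm]
  obtain ⟨j, hj⟩ : ∃ j : ℕ,
      volume (({x : E n | t ≤ v x} ∩ ball 0 ((N:ℝ)+1)) ∩ {y : E n | w y ≤ (j:ℝ≥0∞)}) ≠ 0 := by
    by_contra hfa; push_neg at hfa
    apply hN
    have hsub : {x : E n | t ≤ v x} ∩ ball 0 ((N:ℝ)+1) ⊆
        (⋃ j : ℕ, (({x : E n | t ≤ v x} ∩ ball 0 ((N:ℝ)+1)) ∩ {y : E n | w y ≤ (j:ℝ≥0∞)})) ∪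
          ({y : E n | w y = ∞} ∩ ball (0:E n) ((N:ℝ)+1)) := by
      intro x hx
      rcases eq_or_ne (w x) ∞ with hw | hw
      · exact Or.inr ⟨hw, hx.2⟩
      · obtain ⟨j, hjx⟩ := ENNReal.exists_nat_gt hw
        exact Or.inl (Set.mem_iUnion.mpr ⟨j, hx, hjx.le⟩)
    exact measure_mono_null hsub
      (measure_union_null (measure_iUnion_null hfa) hwfin)
  set A : Set (E n) := ({x : E n | t ≤ v x} ∩ ball 0 ((N:ℝ)+1)) ∩ {y : E n | w y ≤ (j:ℝ≥0∞)}
    with hAdef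
  have hAmeas : MeasurableSet A :=
    ((measurableSet_le measurable_const hvm).inter measurableSet_ball).inter
      (measurableSet_le hwm measurable_const)
  have hAv : ∀ y ∈ A, t ≤ v y := fun y hy => hy.1.1
  have hAw : ∀ y ∈ A, ((j:ℝ≥0∞))⁻¹ ≤ (w y)⁻¹ := fun y hy => ENNReal.inv_le_inv' hy.2
  -- density point
  obtain ⟨c, hc⟩ : ∃ c : E n, Tendsto
      (fun rr => volume (A ∩ closedBall c rr) / volume (closedBall c rr)) (𝓝[>] 0) (𝓝 1) := by
    have hres : volume.restrict A ≠ 0 := by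
      intro hz
      apply hj
      have := congrArg (fun ν : Measure (E n) => ν Set.univ) hz
      simpa [Measure.restrict_apply_univ] using this
    haveI : (ae (volume.restrict A)).NeBot := ae_neBot.mpr hres
    exact (Besicovitch.ae_tendsto_measure_inter_div volume A).exists
  have hhalf : ∀ᶠ rr in 𝓝[>] (0:ℝ),
      1/2 < volume (A ∩ closedBall c rr) / volume (closedBall c rr) :=
    hc.eventually (lt_mem_nhds (by norm_num : (1/2 : ℝ≥0∞) < 1))
  obtain ⟨R1, hR1pos, hR1⟩ : ∃ R1 : ℝ, 0 < R1 ∧ ∀ rr : ℝ, 0 < rr → rr ≤ R1 →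
      1/2 < volume (A ∩ closedBall c rr) / volume (closedBall c rr) := by
    rw [eventually_nhdsWithin_iff] at hhalf
    rcases Metric.eventually_nhds_iff.mp hhalf with ⟨ε, hε, hball'⟩
    refine ⟨ε/2, by linarith, fun rr h1 h2 => hball' ?_ h1⟩
    rw [Real.dist_eq, sub_zero, abs_of_pos h1]; linarith
  -- quantitative measure lower bound
  have hAmeasure : ∀ R : ℝ, 0 < R → R ≤ 2*R1 →
      2⁻¹ * volume (ball c (R/2)) ≤ volume (A ∩ ball c R) := by
    intro R h1 h2
    have hrr : 0 < R/2 := by linarith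
    have hcb0 : volume (closedBall c (R/2)) ≠ 0 :=
      ((measure_ball_pos volume c hrr).trans_le (measure_mono ball_subset_closedBall)).ne'
    have hcbt : volume (closedBall c (R/2)) ≠ ∞ := measure_closedBall_lt_top.ne
    have h3 := hR1 (R/2) hrr (by linarith)
    rw [ENNReal.lt_div_iff_mul_lt (Or.inl hcb0) (Or.inl hcbt)] at h3
    calc 2⁻¹ * volume (ball c (R/2))
        ≤ 2⁻¹ * volume (closedBall c (R/2)) :=
          mul_le_mul_right (measure_mono ball_subset_closedBall) _
      _ = 1/2 * volume (closedBall c (R/2)) := by rw [one_div]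
      _ ≤ volume (A ∩ closedBall c (R/2)) := h3.le
      _ ≤ volume (A ∩ ball c R) :=
          measure_mono (Set.inter_subset_inter_right _ (closedBall_subset_ball (by linarith)))
  have hAne : ∀ R : ℝ, 0 < R → R ≤ 2*R1 → volume (A ∩ ball c R) ≠ 0 := by
    intro R h1 h2
    have hpos : (0:ℝ≥0∞) < 2⁻¹ * volume (ball c (R/2)) :=
      ENNReal.mul_pos (by norm_num) (measure_ball_pos volume c (by linarith)).ne'
    exact (hpos.trans_le (hAmeasure R h1 h2)).ne'
  -- essSup lower bound
  have hess : ∀ R : ℝ, 0 < R → R ≤ 2*R1 →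
      ((j:ℝ≥0∞))⁻¹ ≤ essSup (fun y => (w y)⁻¹) (volume.restrict (ball c R)) := by
    intro R h1 h2
    apply essSup_lower (S := A ∩ ball c R)
    · rw [Measure.restrict_apply' measurableSet_ball, Set.inter_assoc, Set.inter_self]
      exact hAne R h1 h2
    · exact fun y hy => hAw y hy.1
  -- middle factor identity
  have hns : (n:ℝ) * ((δ - δt)/(n:ℝ)) = δ - δt := by field_simp
  have hmid : ∀ R : ℝ, 0 < R → volume (ball c R) ^ ((δ - δt)/(n:ℝ)) =
      κ ^ ((δ - δt)/(n:ℝ)) * (ENNReal.ofReal R) ^ (δ - δt) := by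
    intro R hR
    rw [hball c R hR, ENNReal.mul_rpow_of_ne_top (pow_ne_top ENNReal.ofReal_ne_top) hκt,
      mul_comm]
    congr 1
    rw [← ENNReal.rpow_natCast (ENNReal.ofReal R) n, ← ENNReal.rpow_mul, hns]
  have hj0 : ((j:ℝ≥0∞))⁻¹ ≠ 0 := ENNReal.inv_ne_zero.mpr (ENNReal.natCast_ne_top j)
  rcases hδt with hcase | hcase
  · -- Case 1 : δ < δt
    set β : ℝ≥0∞ := volume (ball c R1) ^ ((1:ℝ)/(n:ℝ)) + ENNReal.ofReal R1 with hβdef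
    have hβt : β ≠ ∞ := ENNReal.add_ne_top.mpr
      ⟨ENNReal.rpow_ne_top_of_nonneg (by positivity) measure_ball_lt_top.ne,
        ENNReal.ofReal_ne_top⟩
    have hβd0 : β ^ (-d) ≠ 0 := by
      rw [ENNReal.rpow_neg]
      exact ENNReal.inv_ne_zero.mpr (ENNReal.rpow_ne_top_of_nonneg hd0.le hβt)
    set S0 : Set (E n) := A ∩ ball c R1 with hS0def
    have hS0meas : MeasurableSet S0 := hAmeas.inter measurableSet_ball
    have hS0ne : volume S0 ≠ 0 := hAne R1 hR1pos (by linarith)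
    have hS0q : volume S0 ^ q ≠ 0 := by
      intro h
      rcases ENNReal.rpow_eq_zero_iff.mp h with ⟨h1,_⟩|⟨_,h2⟩
      exacts [hS0ne h1, absurd h2 (not_lt.mpr hq0)]
    have heN : ∀ R : ℝ, 0 < R → R ≤ R1 →
        t * β ^ (-d) * volume S0 ^ q ≤ eN r' (fun y =>
          v y * (volume (ball c R) ^ ((1:ℝ)/(n:ℝ)) + ENNReal.ofReal (dist c y)) ^ (-d))
          volume := by
      intro R h1 h2
      apply eN_lower hr'1 _ _ hS0meas hS0ne
      intro y hy
      have hbase : volume (ball c R) ^ ((1:ℝ)/(n:ℝ)) + ENNReal.ofReal (dist c y) ≤ β := by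
        apply add_le_add
        · exact ENNReal.rpow_le_rpow (measure_mono (ball_subset_ball h2)) (by positivity)
        · exact ENNReal.ofReal_le_ofReal (by rw [dist_comm]; exact (mem_ball.mp hy.2).le)
      exact mul_le_mul' (hAv y hy.1) (rpow_neg_antitone hbase hd0.le)
    refine no_blowup (K := ((j:ℝ≥0∞))⁻¹ * κ ^ ((δ - δt)/(n:ℝ)) * (t * β ^ (-d) * volume S0 ^ q))
      ?_ (e := δ - δt) (by linarith) C hR1pos ?_
    · exact mul_ne_zero (mul_ne_zero hj0 (hκs _))
        (mul_ne_zero (mul_ne_zero ht0 hβd0) hS0q)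
    · intro R h1 h2
      calc ((j:ℝ≥0∞))⁻¹ * κ ^ ((δ - δt)/(n:ℝ)) * (t * β ^ (-d) * volume S0 ^ q) *
            ENNReal.ofReal R ^ (δ - δt)
          = ((j:ℝ≥0∞))⁻¹ * (κ ^ ((δ - δt)/(n:ℝ)) * ENNReal.ofReal R ^ (δ - δt)) *
            (t * β ^ (-d) * volume S0 ^ q) := by ring
        _ = ((j:ℝ≥0∞))⁻¹ * volume (ball c R) ^ ((δ - δt)/(n:ℝ)) *
            (t * β ^ (-d) * volume S0 ^ q) := by rw [hmid R h1]
        _ ≤ essSup (fun y => (w y)⁻¹) (volume.restrict (ball c R)) *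
            volume (ball c R) ^ ((δ - δt)/(n:ℝ)) *
            eN r' (fun y => v y * (volume (ball c R) ^ ((1:ℝ)/(n:ℝ)) +
              ENNReal.ofReal (dist c y)) ^ (-d)) volume :=
            mul_le_mul' (mul_le_mul' (hess R h1 (by linarith)) le_rfl) (heN R h1 h2)
        _ ≤ C := hH c R h1
  · -- Case 2 : αt - n/r < δt
    set γ : ℝ≥0∞ := κ ^ ((1:ℝ)/(n:ℝ)) + 1 with hγdef
    have hγt : γ ≠ ∞ := ENNReal.add_ne_top.mpr
      ⟨ENNReal.rpow_ne_top_of_nonneg (by positivity) hκt, ENNReal.one_ne_top⟩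
    have hγd0 : γ ^ (-d) ≠ 0 := by
      rw [ENNReal.rpow_neg]
      exact ENNReal.inv_ne_zero.mpr (ENNReal.rpow_ne_top_of_nonneg hd0.le hγt)
    set c₂ : ℝ≥0∞ := 2⁻¹ * (ENNReal.ofReal (2⁻¹:ℝ)) ^ (n:ℕ) * κ with hc₂def
    have hc₂0 : c₂ ≠ 0 := by
      refine mul_ne_zero (mul_ne_zero (by norm_num) ?_) hκ0
      exact pow_ne_zero _ (by norm_num : ENNReal.ofReal (2⁻¹:ℝ) ≠ 0)
    have hc₂q : c₂ ^ q ≠ 0 := by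
      intro h
      rcases ENNReal.rpow_eq_zero_iff.mp h with ⟨h1,_⟩|⟨_,h2⟩
      exacts [hc₂0 h1, absurd h2 (not_lt.mpr hq0)]
    -- measure lower bound in the R-ball
    have hmball : ∀ R : ℝ, 0 < R → R ≤ 2*R1 →
        c₂ * (ENNReal.ofReal R) ^ (n:ℕ) ≤ volume (A ∩ ball c R) := by
      intro R h1 h2
      have hhalfball : volume (ball c (R/2)) =
          (ENNReal.ofReal R) ^ (n:ℕ) * (ENNReal.ofReal (2⁻¹:ℝ)) ^ (n:ℕ) * κ := by
        rw [hball c (R/2) (by linarith), div_eq_mul_inv,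
          ENNReal.ofReal_mul h1.le, mul_pow]
      calc c₂ * (ENNReal.ofReal R) ^ (n:ℕ)
          = 2⁻¹ * ((ENNReal.ofReal R) ^ (n:ℕ) * (ENNReal.ofReal (2⁻¹:ℝ)) ^ (n:ℕ) * κ) := by
            rw [hc₂def]; ring
        _ = 2⁻¹ * volume (ball c (R/2)) := by rw [hhalfball]
        _ ≤ volume (A ∩ ball c R) := hAmeasure R h1 h2
    -- pointwise base bound
    have hbase : ∀ R : ℝ, 0 < R → ∀ y ∈ A ∩ ball c R,
        volume (ball c R) ^ ((1:ℝ)/(n:ℝ)) + ENNReal.ofReal (dist c y) ≤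
          ENNReal.ofReal R * γ := by
      intro R h1 y hy
      have hvol : volume (ball c R) ^ ((1:ℝ)/(n:ℝ)) = ENNReal.ofReal R * κ ^ ((1:ℝ)/(n:ℝ)) := by
        rw [hball c R h1, ENNReal.mul_rpow_of_ne_top (pow_ne_top ENNReal.ofReal_ne_top) hκt,
          ← ENNReal.rpow_natCast (ENNReal.ofReal R) n, ← ENNReal.rpow_mul,
          mul_one_div_cancel hnne, ENNReal.rpow_one]
      rw [hvol, hγdef, mul_add, mul_one]
      refine add_le_add le_rfl (ENNReal.ofReal_le_ofReal ?_)
      rw [dist_comm]; exact (mem_ball.mp hy.2).le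
    -- eN lower bound
    have heN : ∀ R : ℝ, 0 < R → R ≤ 2*R1 →
        t * ((ENNReal.ofReal R) ^ (-d) * γ ^ (-d)) *
            (c₂ ^ q * ((ENNReal.ofReal R) ^ ((n:ℝ) * q))) ≤
          eN r' (fun y =>
            v y * (volume (ball c R) ^ ((1:ℝ)/(n:ℝ)) + ENNReal.ofReal (dist c y)) ^ (-d))
            volume := by
      intro R h1 h2
      have hRne0 : ENNReal.ofReal R ≠ 0 := (ENNReal.ofReal_pos.mpr h1).ne'
      have hsplit : (ENNReal.ofReal R * γ) ^ (-d) =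
          (ENNReal.ofReal R) ^ (-d) * γ ^ (-d) :=
        ENNReal.mul_rpow_of_ne_top ENNReal.ofReal_ne_top hγt _
      have hmeas : c₂ ^ q * ((ENNReal.ofReal R) ^ ((n:ℝ) * q)) ≤
          volume (A ∩ ball c R) ^ q := by
        calc c₂ ^ q * ((ENNReal.ofReal R) ^ ((n:ℝ) * q))
            = (c₂ * (ENNReal.ofReal R) ^ (n:ℕ)) ^ q := by
              conv_rhs => rw [ENNReal.mul_rpow_of_nonneg _ _ hq0, ← ENNReal.rpow_natCast_mul]
          _ ≤ volume (A ∩ ball c R) ^ q := ENNReal.rpow_le_rpow (hmball R h1 h2) hq0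
      calc t * ((ENNReal.ofReal R) ^ (-d) * γ ^ (-d)) *
            (c₂ ^ q * ((ENNReal.ofReal R) ^ ((n:ℝ) * q)))
          ≤ t * (ENNReal.ofReal R * γ) ^ (-d) * volume (A ∩ ball c R) ^ q := by
            rw [hsplit]; exact mul_le_mul_right hmeas _
        _ ≤ _ := by
            apply eN_lower hr'1 _ _ (hAmeas.inter measurableSet_ball) (hAne R h1 h2)
            intro y hy
            exact mul_le_mul' (hAv y hy.1)
              (rpow_neg_antitone (hbase R h1 y hy) hd0.le)
    -- exponent
    set e : ℝ := (δ - δt) + (-d) + (n:ℝ) * q with hedef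
    have hrq : (n:ℝ) * r⁻¹.toReal = (n:ℝ) - (n:ℝ) * q := by
      have : r⁻¹.toReal = 1 - q := by linarith
      rw [this]; ring
    have he : e < 0 := by
      rw [hedef, hddef]
      have := hcase
      linarith
    refine no_blowup
      (K := ((j:ℝ≥0∞))⁻¹ * κ ^ ((δ - δt)/(n:ℝ)) * (t * γ ^ (-d) * c₂ ^ q))
      ?_ he C hR1pos ?_
    · exact mul_ne_zero (mul_ne_zero hj0 (hκs _))
        (mul_ne_zero (mul_ne_zero ht0 hγd0) hc₂q)
    · intro R h1 h2
      have hRne0 : ENNReal.ofReal R ≠ 0 := (ENNReal.ofReal_pos.mpr h1).ne'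
      have hexp : (ENNReal.ofReal R) ^ e =
          (ENNReal.ofReal R) ^ (δ - δt) * (ENNReal.ofReal R) ^ (-d) *
            (ENNReal.ofReal R) ^ ((n:ℝ) * q) := by
        rw [hedef, ENNReal.rpow_add _ _ hRne0 ENNReal.ofReal_ne_top,
          ENNReal.rpow_add _ _ hRne0 ENNReal.ofReal_ne_top]
      calc ((j:ℝ≥0∞))⁻¹ * κ ^ ((δ - δt)/(n:ℝ)) * (t * γ ^ (-d) * c₂ ^ q) *
            ENNReal.ofReal R ^ e
          = ((j:ℝ≥0∞))⁻¹ * (κ ^ ((δ - δt)/(n:ℝ)) * ENNReal.ofReal R ^ (δ - δt)) *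
            (t * ((ENNReal.ofReal R) ^ (-d) * γ ^ (-d)) *
              (c₂ ^ q * ((ENNReal.ofReal R) ^ ((n:ℝ) * q)))) := by
            rw [hexp]; ring
        _ = ((j:ℝ≥0∞))⁻¹ * volume (ball c R) ^ ((δ - δt)/(n:ℝ)) *
            (t * ((ENNReal.ofReal R) ^ (-d) * γ ^ (-d)) *
              (c₂ ^ q * ((ENNReal.ofReal R) ^ ((n:ℝ) * q)))) := by rw [hmid R h1]
        _ ≤ essSup (fun y => (w y)⁻¹) (volume.restrict (ball c R)) *
            volume (ball c R) ^ ((δ - δt)/(n:ℝ)) *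
            eN r' (fun y => v y * (volume (ball c R) ^ ((1:ℝ)/(n:ℝ)) +
              ENNReal.ofReal (dist c y)) ^ (-d)) volume :=
            mul_le_mul' (mul_le_mul' (hess R h1 (by linarith)) le_rfl)
              (heN R h1 (by linarith))
        _ ≤ C := hH c R h1
end
end

section
/- Let n ≥ 1, m ∈ ℕ ∪ {0}, 0 ≤ α < n, 0 < δ < 1 with mδ < n − α, α̃ = mδ + α, and suppose δ̃ = δ = α̃ − n/r, i.e. r = n/(α̃ − δ) if α̃ > δ and r = ∞ if α̃ = δ (note that necessarily 1 < r ≤ ∞). If w is a locally integrable weight and the pair (v,w) belongs to H(r, α̃, δ̃), then v = 0 almost everywhere in ℝⁿ. -/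
/-!
Since `δ̃ = δ = α̃ - n/r`, the power of `|B|` in the `H` condition disappears and
`(n - α̃ + δ) r' = n`, so the condition bounds `∫ v(y)^{r'} (|B|^{1/n} + |x_B - y|)^{-n} dy`
by `(C / ‖1/w‖_{L^∞(B)})^{r'}`. At almost every `x`, `w(x) < ∞` and `1/w(x)` is at most the
essential supremum of `1/w` on every ball around `x`; shrinking the ball, monotone convergence
gives `∫ v(y)^{r'} |x - y|^{-n} dy ≤ (C w(x))^{r'} < ∞` for almost every `x`. If `v > 1/k` on a
set `S` of positive measure, then at a density point `x` of `S` every dyadic annulus around `x`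
contributes the same positive amount to `∫_S |x - y|^{-n} dy`, which therefore diverges.
-/

open MeasureTheory Metric ENNReal NNReal

noncomputable section

open Filter Topology Module

theorem ae_forall_isOpen_le_essSup_restrict {X : Type*} [TopologicalSpace X]
    [SecondCountableTopology X] [MeasurableSpace X] [OpensMeasurableSpace X]
    (μ : Measure X) (f : X → ℝ≥0∞) :
    ∀ᵐ x ∂μ, ∀ U : Set X, IsOpen U → x ∈ U → f x ≤ essSup f (μ.restrict U) := by
  obtain ⟨b, hbc, -, hb⟩ := TopologicalSpace.exists_countable_basis X
  have hbasis : ∀ᵐ x ∂μ, ∀ V ∈ b, x ∈ V → f x ≤ essSup f (μ.restrict V) :=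
    (ae_ball_iff hbc).2 fun V hV =>
      (ae_restrict_iff' (hb.isOpen hV).measurableSet).1 (ENNReal.ae_le_essSup f)
  filter_upwards [hbasis] with x hx U hU hxU
  obtain ⟨V, hVb, hxV, hVU⟩ := hb.exists_subset_of_mem_open hxU hU
  exact (hx V hVb hxV).trans (essSup_mono_measure' (Measure.restrict_mono hVU le_rfl))

theorem ae_lt_top_of_setLIntegral_ball_lt_top {X : Type*} [PseudoMetricSpace X]
    [MeasurableSpace X] [OpensMeasurableSpace X] {μ : Measure X} {w : X → ℝ≥0∞}
    (hw : AEMeasurable w μ) (x₀ : X) (h : ∀ R : ℝ, 0 < R → ∫⁻ y in ball x₀ R, w y ∂μ < ∞) :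
    ∀ᵐ x ∂μ, w x < ∞ := by
  rw [← Measure.restrict_univ (μ := μ), ← iUnion_ball_nat_succ x₀, ae_restrict_iUnion_iff]
  exact fun k => ae_lt_top' hw.restrict (h _ (by positivity)).ne

theorem tendsto_measure_ball_zero {X : Type*} [MetricSpace X] [MeasurableSpace X]
    [OpensMeasurableSpace X] (μ : Measure X) [IsLocallyFiniteMeasure μ] [NullSingletonClass μ]
    (x : X) :
    Tendsto (fun R => μ (ball x R)) (𝓝[>] 0) (𝓝 0) := by
  obtain ⟨ε, hε, hεfin⟩ := (μ.finiteAt_nhds x).exists_mem_basis nhds_basis_ball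
  have := tendsto_measure_biInter_gt (μ := μ) (s := ball x) (a := 0)
    (fun r _ => measurableSet_ball.nullMeasurableSet) (fun _ _ _ hij => ball_subset_ball hij)
    ⟨ε, hε, hεfin.ne⟩
  rwa [biInter_gt_ball, closedBall_zero, measure_singleton] at this

theorem lintegral_mul_edist_rpow_neg_le {X : Type*} [PseudoMetricSpace X] [MeasurableSpace X]
    [OpensMeasurableSpace X] {μ : Measure X} {f : X → ℝ≥0∞} (hf : Measurable f) {s : ℝ}
    (hs : 0 ≤ s) (x : X) {B : ℝ≥0∞}
    (h : ∀ ε : ℝ≥0∞, 0 < ε → ∫⁻ y, f y * (ε + edist x y) ^ (-s) ∂μ ≤ B) :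
    ∫⁻ y, f y * edist x y ^ (-s) ∂μ ≤ B := by
  set g : ℕ → X → ℝ≥0∞ := fun k y => f y * ((k : ℝ≥0∞)⁻¹ + edist x y) ^ (-s)
  have hg : ∀ k, AEMeasurable (g k) μ := fun k =>
    (hf.mul ((measurable_const.add (continuous_const.edist continuous_id).measurable).pow_const
      _)).aemeasurable
  have hmono : ∀ y, Monotone fun k => g k y := by
    intro y k l hkl
    simp only [g, ENNReal.rpow_neg]
    gcongr
  have hlim : ∀ y, Tendsto (fun k => g k y) atTop (𝓝 (f y * edist x y ^ (-s))) := by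
    intro y
    have hsum : Tendsto (fun k : ℕ => (k : ℝ≥0∞)⁻¹ + edist x y) atTop (𝓝 (edist x y)) := by
      simpa using ENNReal.tendsto_inv_nat_nhds_zero.add_const (edist x y)
    refine ENNReal.Tendsto.const_mul ((ENNReal.continuous_rpow_const.tendsto _).comp hsum)
      (Or.inl ?_)
    rw [ENNReal.rpow_neg]
    exact ENNReal.inv_ne_zero.2 (ENNReal.rpow_ne_top_of_nonneg hs (edist_ne_top x y))
  exact le_of_tendsto' (lintegral_tendsto_of_tendsto_of_monotone hg (ae_of_all _ hmono)
    (ae_of_all _ hlim)) fun k => h _ (ENNReal.inv_pos.2 (ENNReal.natCast_ne_top k))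

section AddHaar

variable {V : Type*} [NormedAddCommGroup V] [NormedSpace ℝ V] [FiniteDimensional ℝ V]
  [MeasurableSpace V] [BorelSpace V] [Nontrivial V] (μ : Measure V) [μ.IsAddHaarMeasure]

theorem measure_closedBall_half_le (x : V) {r : ℝ} (hr : 0 ≤ r) :
    μ (closedBall x (r / 2)) ≤ μ (closedBall x r) / 2 := by
  have hpow : (r / 2) ^ finrank ℝ V ≤ r ^ finrank ℝ V / 2 := by
    rw [div_pow]
    exact div_le_div_of_nonneg_left (by positivity) two_pos
      (le_self_pow₀ one_le_two Module.finrank_pos.ne')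
  rw [Measure.addHaar_closedBall μ x hr, Measure.addHaar_closedBall μ x (by positivity),
    ENNReal.div_eq_inv_mul, ← mul_assoc, mul_comm _ (ENNReal.ofReal _), ← div_eq_mul_inv,
    ← ENNReal.ofReal_ofNat 2, ← ENNReal.ofReal_div_of_pos two_pos]
  gcongr

theorem le_setLIntegral_annulus_edist_rpow_neg_finrank {S : Set V} (x : V) {r : ℝ} (hr : 0 < r)
    (hdens : 3 / 4 ≤ μ (S ∩ closedBall x r) / μ (closedBall x r)) :
    μ (ball (0 : V) 1) / 4 ≤ ∫⁻ y in S ∩ (closedBall x r \ closedBall x (r / 2)),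
      edist x y ^ (-(finrank ℝ V : ℝ)) ∂μ := by
  set A := S ∩ (closedBall x r \ closedBall x (r / 2))
  set ρ := ENNReal.ofReal r ^ finrank ℝ V with hρ
  have hM : μ (closedBall x r) = ρ * μ (ball 0 1) := by
    rw [Measure.addHaar_closedBall μ x hr.le, ENNReal.ofReal_pow hr.le]
  set M := μ (closedBall x r)
  have hρ0 : ρ ≠ 0 := pow_ne_zero _ (ENNReal.ofReal_pos.2 hr).ne'
  have hρtop : ρ ≠ ∞ := ENNReal.pow_ne_top ENNReal.ofReal_ne_top
  have hmass : M / 4 ≤ μ A := by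
    have hsplit : 3 / 4 * M = M / 4 + M / 2 := by
      rw [div_eq_mul_inv M, div_eq_mul_inv M, ← mul_add, mul_comm]
      congr 1
      rw [← ENNReal.toReal_eq_toReal_iff' (ENNReal.div_ne_top (by simp) (by simp)) (by simp),
        ENNReal.toReal_add (by simp) (by simp)]
      norm_num
    have hcover : S ∩ closedBall x r ⊆ A ∪ closedBall x (r / 2) := fun y ⟨hyS, hyr⟩ => by
      by_cases hy : y ∈ closedBall x (r / 2)
      · exact Or.inr hy
      · exact Or.inl ⟨hyS, hyr, hy⟩
    refine ENNReal.le_of_add_le_add_right (ENNReal.div_ne_top measure_closedBall_lt_top.ne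
      two_ne_zero) (?_ : M / 4 + M / 2 ≤ μ A + M / 2)
    calc M / 4 + M / 2 = 3 / 4 * M := hsplit.symm
      _ ≤ μ (S ∩ closedBall x r) := ENNReal.mul_le_of_le_div hdens
      _ ≤ μ A + μ (closedBall x (r / 2)) := (measure_mono hcover).trans (measure_union_le _ _)
      _ ≤ μ A + M / 2 := by gcongr; exact measure_closedBall_half_le μ x hr.le
  calc μ (ball 0 1) / 4 = ρ⁻¹ * (M / 4) := by
        rw [hM, mul_div_assoc, ← mul_assoc, ENNReal.inv_mul_cancel hρ0 hρtop, one_mul]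
    _ ≤ ρ⁻¹ * μ A := by gcongr
    _ = ∫⁻ _ in A, ρ⁻¹ ∂μ := (setLIntegral_const _ _).symm
    _ ≤ ∫⁻ y in A, edist x y ^ (-(finrank ℝ V : ℝ)) ∂μ := by
        refine setLIntegral_mono ((continuous_const.edist continuous_id).measurable.pow_const _)
          fun y hy => ?_
        rw [ENNReal.rpow_neg, ENNReal.rpow_natCast, edist_dist, hρ]
        gcongr
        exact mem_closedBall'.1 hy.2.1

theorem setLIntegral_edist_rpow_neg_finrank_eq_top {S : Set V} (hS : MeasurableSet S) {x : V}
    (hx : Tendsto (fun r => μ (S ∩ closedBall x r) / μ (closedBall x r)) (𝓝[>] 0) (𝓝 1)) :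
    ∫⁻ y in S, edist x y ^ (-(finrank ℝ V : ℝ)) ∂μ = ∞ := by
  obtain ⟨ε, hε : 0 < ε, hdens⟩ := mem_nhdsGT_iff_exists_Ioo_subset.1
    (hx.eventually (eventually_ge_nhds (by
      rw [ENNReal.div_lt_iff (by norm_num) (by norm_num)]; norm_num : (3 / 4 : ℝ≥0∞) < 1)))
  set t : ℕ → ℝ := fun j => ε / 2 ^ (j + 1)
  have ht : ∀ j, 0 < t j := fun j => by positivity
  set A : ℕ → Set V := fun j => S ∩ (closedBall x (t j) \ closedBall x (t j / 2))
  have hA : ∀ j, MeasurableSet (A j) := fun j =>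
    hS.inter (measurableSet_closedBall.diff measurableSet_closedBall)
  have hdisj : Pairwise (Function.onFun Disjoint A) := by
    refine (pairwise_disjoint_on A).2 fun i j hij => Set.disjoint_left.2 fun y hyi hyj => ?_
    refine hyi.2.2 (closedBall_subset_closedBall ?_ hyj.2.1)
    calc t j ≤ t (i + 1) := div_le_div_of_nonneg_left hε.le (by positivity)
          (pow_le_pow_right₀ one_le_two (by omega))
      _ = t i / 2 := by simp only [t, pow_succ]; ring
  have hannulus : ∀ j, μ (ball (0 : V) 1) / 4 ≤
      ∫⁻ y in A j, edist x y ^ (-(finrank ℝ V : ℝ)) ∂μ := fun j =>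
    le_setLIntegral_annulus_edist_rpow_neg_finrank μ x (ht j)
      (hdens ⟨ht j, div_lt_self hε (one_lt_pow₀ _root_.one_lt_two (Nat.succ_ne_zero j))⟩)
  refine top_le_iff.1 ?_
  calc ∞ = ∑' _ : ℕ, μ (ball (0 : V) 1) / 4 :=
        (ENNReal.tsum_const_eq_top_of_ne_zero (ENNReal.div_ne_zero.2
          ⟨(measure_ball_pos μ 0 one_pos).ne', by norm_num⟩)).symm
    _ ≤ ∑' j, ∫⁻ y in A j, edist x y ^ (-(finrank ℝ V : ℝ)) ∂μ := ENNReal.tsum_le_tsum hannulus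
    _ = ∫⁻ y in ⋃ j, A j, edist x y ^ (-(finrank ℝ V : ℝ)) ∂μ := (lintegral_iUnion hA hdisj _).symm
    _ ≤ ∫⁻ y in S, edist x y ^ (-(finrank ℝ V : ℝ)) ∂μ :=
        lintegral_mono_set (Set.iUnion_subset fun j => Set.inter_subset_left)

theorem ae_eq_zero_of_ae_lintegral_mul_edist_rpow_neg_finrank_lt_top {f : V → ℝ≥0∞}
    (hf : Measurable f)
    (h : ∀ᵐ x ∂μ, ∫⁻ y, f y * edist x y ^ (-(finrank ℝ V : ℝ)) ∂μ < ∞) :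
    ∀ᵐ x ∂μ, f x = 0 := by
  by_contra hne
  obtain ⟨k, hk⟩ : ∃ k : ℕ, μ {x | (k : ℝ≥0∞)⁻¹ < f x} ≠ 0 := by
    by_contra! hnull
    refine hne (ae_iff.2 (measure_mono_null (fun x hx => ?_) (measure_iUnion_null hnull)))
    exact Set.mem_iUnion.2 (ENNReal.exists_inv_nat_lt hx)
  set S := {x | (k : ℝ≥0∞)⁻¹ < f x}
  have hS : MeasurableSet S := measurableSet_lt measurable_const hf
  have hgood : ∀ᵐ x ∂μ.restrict S, ∫⁻ y, f y * edist x y ^ (-(finrank ℝ V : ℝ)) ∂μ < ∞ ∧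
      Tendsto (fun r => μ (S ∩ closedBall x r) / μ (closedBall x r)) (𝓝[>] 0) (𝓝 1) := by
    rw [ae_restrict_iff' hS]
    filter_upwards [h, Besicovitch.ae_tendsto_measure_inter_div_of_measurableSet μ hS]
      with x hfin hdens hxS
    exact ⟨hfin, by rwa [Set.indicator_of_mem hxS, Pi.one_apply] at hdens⟩
  obtain ⟨x, -, hxfin, hxdens⟩ := Measure.exists_mem_of_measure_ne_zero_of_ae hk hgood
  refine hxfin.ne (top_le_iff.1 ?_)
  calc ∞ = (k : ℝ≥0∞)⁻¹ * ∫⁻ y in S, edist x y ^ (-(finrank ℝ V : ℝ)) ∂μ := by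
        rw [setLIntegral_edist_rpow_neg_finrank_eq_top μ hS hxdens,
          ENNReal.mul_top (ENNReal.inv_ne_zero.2 (ENNReal.natCast_ne_top k))]
    _ ≤ ∫⁻ y in S, (k : ℝ≥0∞)⁻¹ * edist x y ^ (-(finrank ℝ V : ℝ)) ∂μ :=
        lintegral_const_mul_le _ _
    _ ≤ ∫⁻ y in S, f y * edist x y ^ (-(finrank ℝ V : ℝ)) ∂μ :=
        setLIntegral_mono' hS fun y hy => by gcongr; exact le_of_lt hy
    _ ≤ ∫⁻ y, f y * edist x y ^ (-(finrank ℝ V : ℝ)) ∂μ := setLIntegral_le_lintegral _ _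

end AddHaar

theorem ENNReal.HolderConjugate.one_sub_inv_toReal_mul_toReal {r r' : ℝ≥0∞}
    [ENNReal.HolderConjugate r r'] (hr' : r' ≠ ∞) : (1 - r⁻¹.toReal) * r'.toReal = 1 := by
  have h : 1 - r⁻¹.toReal = r'⁻¹.toReal := by
    rw [← ENNReal.HolderConjugate.one_sub_inv r r', ENNReal.toReal_sub_of_le
      (ENNReal.inv_le_one.2 (ENNReal.HolderConjugate.one_le r r')) ENNReal.one_ne_top,
      ENNReal.toReal_one]
  rw [h, ENNReal.toReal_inv,
    inv_mul_cancel₀ (ENNReal.toReal_pos (ENNReal.HolderConjugate.ne_zero r' r) hr').ne']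

theorem Hclass.essSup_mul_lintegral_rpow_le {n : ℕ} {r' : ℝ≥0∞} {αt δ : ℝ}
    {v w : E n → ℝ≥0∞} {C : ℝ≥0∞} (hH : Hclass n r' αt δ δ v w C) (hr' : r' ≠ ∞)
    (hexp : ((n : ℝ) - αt + δ) * r'.toReal = n) (c : E n) {R : ℝ} (hR : 0 < R) :
    essSup (fun y => (w y)⁻¹) (volume.restrict (ball c R)) *
      (∫⁻ y, v y ^ r'.toReal * (volume (ball c R) ^ ((1 : ℝ) / n) + edist c y) ^ (-(n : ℝ)))
        ^ (1 / r'.toReal) ≤ C := by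
  have h := hH c R hR
  rw [sub_self, zero_div, ENNReal.rpow_zero, mul_one, eN, if_neg hr'] at h
  refine le_of_eq_of_le ?_ h
  congr 3 with y
  rw [edist_dist, ENNReal.mul_rpow_of_nonneg _ _ ENNReal.toReal_nonneg, ← ENNReal.rpow_mul,
    neg_mul, hexp]

theorem Hclass.ae_lintegral_mul_edist_rpow_neg_le {n : ℕ} (hn : n ≠ 0) {r' : ℝ≥0∞} {αt δ : ℝ}
    {v w : E n → ℝ≥0∞} {C : ℝ≥0∞} (hH : Hclass n r' αt δ δ v w C) (hv : Measurable v)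
    (hw : ∀ᵐ x, w x < ∞) (hC : C ≠ ∞) (hp : 0 < r'.toReal)
    (hexp : ((n : ℝ) - αt + δ) * r'.toReal = n) :
    ∀ᵐ x, ∫⁻ y, v y ^ r'.toReal * edist x y ^ (-(n : ℝ)) ≤ (C * w x) ^ r'.toReal := by
  have : Nonempty (Fin n) := ⟨⟨0, Nat.pos_of_ne_zero hn⟩⟩
  filter_upwards [hw, ae_forall_isOpen_le_essSup_restrict volume (fun y => (w y)⁻¹)]
    with x hwx hess
  have hball : Tendsto (fun R => volume (ball x R) ^ ((1 : ℝ) / n)) (𝓝[>] 0) (𝓝 0) := by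
    have h := ((ENNReal.continuous_rpow_const (y := 1 / (n : ℝ))).tendsto 0).comp
      (tendsto_measure_ball_zero volume x)
    rwa [ENNReal.zero_rpow_of_pos (by positivity)] at h
  refine lintegral_mul_edist_rpow_neg_le (hv.pow_const _) n.cast_nonneg x fun ε hε => ?_
  obtain ⟨R, hRε, hR⟩ := ((hball.eventually (eventually_le_nhds hε)).and
    self_mem_nhdsWithin).exists
  calc ∫⁻ y, v y ^ r'.toReal * (ε + edist x y) ^ (-(n : ℝ))
      ≤ ∫⁻ y, v y ^ r'.toReal * (volume (ball x R) ^ ((1 : ℝ) / n) + edist x y) ^ (-(n : ℝ)) :=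
        lintegral_mono fun y => by simp only [ENNReal.rpow_neg]; gcongr
    _ ≤ (C * w x) ^ r'.toReal := by
        have h := (mul_le_mul_left (hess _ isOpen_ball (mem_ball_self hR)) _).trans
          (hH.essSup_mul_lintegral_rpow_le (ENNReal.toReal_pos_iff.1 hp).2.ne hexp x hR)
        rwa [← ENNReal.div_eq_inv_mul, ENNReal.div_le_iff_le_mul (Or.inr hC) (Or.inl hwx.ne),
          one_div r'.toReal, ENNReal.rpow_inv_le_iff hp] at h

theorem statement6_general (n m : ℕ) (α δ δt αt : ℝ) (r r' : ℝ≥0∞)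
    (hn : 1 ≤ n) (hδ0 : 0 < δ)
    (hmδ : (m : ℝ) * δ < (n : ℝ) - α) (hαt : αt = (m : ℝ) * δ + α)
    (hconj : r⁻¹ + r'⁻¹ = 1)
    (hδδt : δt = δ) (hδeq : δ = αt - (n : ℝ) * r⁻¹.toReal)
    (v w : E n → ℝ≥0∞) (hvm : Measurable v) (hwm : Measurable w)
    (hwloc : ∀ (c : E n) (R : ℝ), 0 < R → (∫⁻ y in ball c R, w y) < ∞)
    (C : ℝ≥0) (hH : Hclass n r' αt δ δt v w (C : ℝ≥0∞)) :
    ∀ᵐ x ∂(volume : Measure (E n)), v x = 0 := by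
  subst δt
  have : ENNReal.HolderConjugate r r' := ENNReal.holderConjugate_iff.2 hconj
  have : Nonempty (Fin n) := ⟨⟨0, hn⟩⟩
  -- `r = 1` would force `δ = α̃ - n = mδ + α - n < 0`
  have hr' : r' ≠ ∞ := (ENNReal.HolderConjugate.ne_top_iff_ne_one r' r).2 fun hr => by
    rw [hr, inv_one, ENNReal.toReal_one] at hδeq
    linarith
  have hp : 0 < r'.toReal := ENNReal.toReal_pos (ENNReal.HolderConjugate.ne_zero r' r) hr'
  have hexp : ((n : ℝ) - αt + δ) * r'.toReal = n := by
    rw [show (n : ℝ) - αt + δ = n * (1 - r⁻¹.toReal) by linarith, mul_assoc,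
      ENNReal.HolderConjugate.one_sub_inv_toReal_mul_toReal hr', mul_one]
  have hwfin := ae_lt_top_of_setLIntegral_ball_lt_top hwm.aemeasurable 0 (hwloc 0)
  have hfin := hH.ae_lintegral_mul_edist_rpow_neg_le (by omega) hvm hwfin ENNReal.coe_ne_top hp
    hexp
  have hzero := ae_eq_zero_of_ae_lintegral_mul_edist_rpow_neg_finrank_lt_top volume
    (hvm.pow_const r'.toReal) <| by
      filter_upwards [hfin, hwfin] with x hx hwx
      rw [finrank_euclideanSpace_fin]
      exact hx.trans_lt (ENNReal.rpow_lt_top_of_nonneg hp.le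
        (ENNReal.mul_ne_top ENNReal.coe_ne_top hwx.ne))
  filter_upwards [hzero] with x hx
  exact (ENNReal.rpow_eq_zero_iff_of_pos hp).1 hx

/-- if `δ̃ = δ = α̃ − n/r`, any pair `(v,w) ∈ H(r, α̃, δ̃)` with
`w` locally integrable has `v = 0` a.e. -/
theorem statement6 (n m : ℕ) (α δ δt αt : ℝ) (r r' : ℝ≥0∞)
    (hn : 1 ≤ n) (hα0 : 0 ≤ α) (hαn : α < (n : ℝ)) (hδ0 : 0 < δ) (hδ1 : δ < 1)
    (hmδ : (m : ℝ) * δ < (n : ℝ) - α) (hαt : αt = (m : ℝ) * δ + α)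
    (hr : 1 ≤ r) (hconj : r⁻¹ + r'⁻¹ = 1)
    (hδδt : δt = δ) (hδeq : δ = αt - (n : ℝ) * r⁻¹.toReal)
    (v w : E n → ℝ≥0∞) (hvm : Measurable v) (hwm : Measurable w)
    (hwloc : ∀ (c : E n) (R : ℝ), 0 < R → (∫⁻ y in ball c R, w y) < ∞)
    (C : ℝ≥0) (hH : Hclass n r' αt δ δt v w (C : ℝ≥0∞)) :
    ∀ᵐ x ∂(volume : Measure (E n)), v x = 0 :=
  statement6_general n m α δ δt αt r r' hn hδ0 hmδ hαt hconj hδδt hδeq v w hvm hwm hwloc C hH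
end
end

section
/- Let n ≥ 1, m ∈ ℕ ∪ {0}, 0 ≤ α < n, 0 < δ < 1 with mδ < n − α, α̃ = mδ + α, and let 1 ≤ r ≤ ∞ be such that δ < α̃ − n/r (with n/∞ = 0). Let θ satisfy α̃ − n/r − δ < θ < n/r' and set β = θ + δ + n/r − α̃, so that β > 0. Then the pair of weights (v,w) given by v(x) = |x|^(−θ) and w(x) = |x|^(−β) belongs to the class H(r, α̃, δ), i.e. to H(r, α̃, δ̃) with δ̃ = δ. -/
open MeasureTheory Metric ENNReal NNReal

noncomputable section

/-!
Write `p = r'`, `a = θ p`, `b = (n - α̃ + δ) p`, `e = |B|^{1/n} ≍ R` and `d = e + |c|` for a ball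
`B = B(c, R)`. The `L^{r'}` factor is the `p`-th root of `∫ |y|^{-a} (e + |c - y|)^{-b} dy`.
Pointwise, either `e + |c - y| ≳ d + |y|` or `|y| ≳ d + |c - y|`, so the integrand is bounded by
`|y|^{-a} (d + |y|)^{-b} + |c - y|^{-b} (d + |c - y|)^{-a}`. By scaling, each of these integrates
to `d^{n-a-b}` times a constant, which is finite because `a, b < n < a + b`. On `B` we have
`|y| ≤ |c| + R ≲ d`, so `‖w⁻¹ χ_B‖_∞ ≲ d^β`, and `β p = a + b - n` makes the powers of `d` cancel.
-/

namespace ENNReal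

theorem rpow_neg_le_rpow_neg_s9 {x y : ℝ≥0∞} {a : ℝ} (hxy : x ≤ y) (ha : 0 ≤ a) :
    y ^ (-a) ≤ x ^ (-a) := by
  rw [rpow_neg, rpow_neg]
  exact ENNReal.inv_le_inv.mpr (rpow_le_rpow hxy ha)

theorem rpow_neg_le_of_le_mul {x y k : ℝ≥0∞} {a : ℝ} (hk₀ : k ≠ 0) (hk : k ≠ ∞) (hy : y ≠ ∞)
    (h : x ≤ k * y) (ha : 0 ≤ a) : y ^ (-a) ≤ k ^ a * x ^ (-a) := by
  calc y ^ (-a) = k ^ a * (k * y) ^ (-a) := by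
        rw [mul_rpow_of_ne_top hk hy, ← mul_assoc, ← rpow_add _ _ hk₀ hk, add_neg_cancel,
          rpow_zero, one_mul]
    _ ≤ k ^ a * x ^ (-a) := mul_le_mul_right (rpow_neg_le_rpow_neg_s9 h ha) _

end ENNReal

/-- Used with `u = ‖y‖`, `v = ‖c - y‖`, `w = e + ‖c - y‖` and `d = e + ‖c‖`. -/
theorem ofReal_rpow_neg_mul_rpow_neg_le {u v w d a b : ℝ} (hvw : v ≤ w)
    (hd : d ≤ u + w) (ha : 0 ≤ a) (hb : 0 ≤ b) :
    ENNReal.ofReal u ^ (-a) * ENNReal.ofReal w ^ (-b) ≤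
      3 ^ b * (ENNReal.ofReal u ^ (-a) * ENNReal.ofReal (d + u) ^ (-b)) +
        3 ^ a * (ENNReal.ofReal v ^ (-b) * ENNReal.ofReal (d + v) ^ (-a)) := by
  have ofReal_three_mul (x : ℝ) : ENNReal.ofReal (3 * x) = 3 * ENNReal.ofReal x := by
    rw [ENNReal.ofReal_mul (by norm_num), ENNReal.ofReal_ofNat]
  have hcases : d + u ≤ 3 * w ∨ d + v ≤ 3 * u := by
    by_contra! h
    linarith [h.1, h.2]
  rcases hcases with h | h
  · refine le_add_right ?_
    rw [mul_left_comm]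
    gcongr
    exact ENNReal.rpow_neg_le_of_le_mul (by norm_num) (by norm_num) ofReal_ne_top
      ((ENNReal.ofReal_le_ofReal h).trans_eq (ofReal_three_mul w)) hb
  · refine le_add_left ((mul_le_mul'
      (ENNReal.rpow_neg_le_of_le_mul (by norm_num) (by norm_num) ofReal_ne_top
        ((ENNReal.ofReal_le_ofReal h).trans_eq (ofReal_three_mul u)) ha)
      (ENNReal.rpow_neg_le_rpow_neg_s9 (ENNReal.ofReal_le_ofReal hvw) hb)).trans_eq ?_)
    ring

section

variable {V : Type*} [NormedAddCommGroup V]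

def normPowKernel (a b d : ℝ) (y : V) : ℝ≥0∞ :=
  ENNReal.ofReal ‖y‖ ^ (-a) * ENNReal.ofReal (d + ‖y‖) ^ (-b)

theorem measurable_normPowKernel [MeasurableSpace V] [BorelSpace V] (a b d : ℝ) :
    Measurable (normPowKernel a b d : V → ℝ≥0∞) := by
  unfold normPowKernel
  fun_prop

theorem essSup_inv_rpow_neg_le [MeasurableSpace V] [BorelSpace V] (μ : Measure V) {β : ℝ}
    (hβ : 0 ≤ β) (c : V) (R : ℝ) :
    essSup (fun y => (ENNReal.ofReal ‖y‖ ^ (-β))⁻¹) (μ.restrict (ball c R)) ≤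
      ENNReal.ofReal (‖c‖ + R) ^ β := by
  refine essSup_le_of_ae_le _ (ae_restrict_of_forall_mem measurableSet_ball fun y hy => ?_)
  simp only [ENNReal.rpow_neg, inv_inv]
  exact ENNReal.rpow_le_rpow (ENNReal.ofReal_le_ofReal (norm_lt_of_mem_ball hy).le) hβ

variable [NormedSpace ℝ V]

theorem normPowKernel_eq_smul {a b d : ℝ} (hd : 0 < d) (y : V) :
    normPowKernel a b d y = ENNReal.ofReal d ^ (-a - b) * normPowKernel a b 1 (d⁻¹ • y) := by
  have hy : ‖y‖ = d * ‖d⁻¹ • y‖ := by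
    rw [norm_smul, Real.norm_of_nonneg (inv_nonneg.2 hd.le), mul_inv_cancel_left₀ hd.ne']
  have hdy : d + ‖y‖ = d * (1 + ‖d⁻¹ • y‖) := by rw [mul_one_add, ← hy]
  have hd₀ : ENNReal.ofReal d ≠ 0 := ENNReal.ofReal_ne_zero_iff.2 hd
  rw [normPowKernel, normPowKernel, hdy, hy, ENNReal.ofReal_mul hd.le, ENNReal.ofReal_mul hd.le,
    mul_rpow_of_ne_top ofReal_ne_top ofReal_ne_top, mul_rpow_of_ne_top ofReal_ne_top ofReal_ne_top,
    sub_eq_add_neg, rpow_add _ _ hd₀ ofReal_ne_top]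
  ring

variable [FiniteDimensional ℝ V] [MeasurableSpace V] [BorelSpace V] (μ : Measure V)
  [μ.IsAddHaarMeasure]

theorem lintegral_comp_inv_smul {R : ℝ} (hR : 0 < R) (g : V → ℝ≥0∞) :
    ∫⁻ x, g (R⁻¹ • x) ∂μ = ENNReal.ofReal (R ^ Module.finrank ℝ V) * ∫⁻ x, g x ∂μ := by
  have hR' : R⁻¹ ≠ 0 := inv_ne_zero hR.ne'
  have h := lintegral_map_equiv g (MeasurableEquiv.smul₀ R⁻¹ hR') (μ := μ)
  rw [MeasurableEquiv.coe_smul₀, Measure.map_addHaar_smul μ hR', lintegral_smul_measure] at h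
  rw [← h, inv_pow, inv_inv, abs_of_pos (by positivity), smul_eq_mul]

theorem lintegral_normPowKernel {a b d : ℝ} (hd : 0 < d) :
    ∫⁻ y, normPowKernel a b d y ∂μ =
      ENNReal.ofReal d ^ ((Module.finrank ℝ V : ℝ) - a - b) * ∫⁻ y, normPowKernel a b 1 y ∂μ := by
  have hd₀ : ENNReal.ofReal d ≠ 0 := ENNReal.ofReal_ne_zero_iff.2 hd
  simp_rw [normPowKernel_eq_smul hd]
  rw [lintegral_const_mul' _ _ (rpow_ne_top_of_ne_zero hd₀ ofReal_ne_top),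
    lintegral_comp_inv_smul μ hd, ← mul_assoc, ENNReal.ofReal_pow hd.le, ← ENNReal.rpow_natCast,
    ← rpow_add _ _ hd₀ ofReal_ne_top]
  ring_nf

theorem setLIntegral_ball_ofReal_norm_rpow_neg_lt_top [Nontrivial V] {a : ℝ}
    (ha : a < Module.finrank ℝ V) :
    ∫⁻ y in ball (0 : V) 1, ENNReal.ofReal ‖y‖ ^ (-a) ∂μ < ∞ := by
  have hint : IntegrableOn (fun y : V => ‖y‖ ^ (-a)) (ball 0 1) μ := by
    rw [integrableOn_fun_norm_addHaar μ (f := fun t : ℝ => t ^ (-a))]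
    have hpow : IntegrableOn (fun t : ℝ => t ^ ((Module.finrank ℝ V : ℝ) - 1 - a)) (Set.Ioo 0 1) :=
      (intervalIntegrable_iff_integrableOn_Ioo_of_le zero_le_one).1
        (intervalIntegral.intervalIntegrable_rpow' (by linarith))
    refine hpow.congr_fun (fun t ht => ?_) measurableSet_Ioo
    rw [smul_eq_mul, ← Real.rpow_natCast, ← Real.rpow_add ht.1,
      Nat.cast_sub Module.finrank_pos, Nat.cast_one, sub_eq_add_neg _ a]
  refine lt_of_eq_of_lt (setLIntegral_congr_fun_ae measurableSet_ball ?_) hint.setLIntegral_lt_top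
  filter_upwards [μ.ae_ne 0] with y hy _
  exact ENNReal.ofReal_rpow_of_pos (norm_pos_iff.2 hy)

theorem lintegral_normPowKernel_one_lt_top {a b : ℝ} (ha : 0 ≤ a) (hb : 0 ≤ b)
    (han : a < Module.finrank ℝ V) (hab : Module.finrank ℝ V < a + b) :
    ∫⁻ y, normPowKernel a b 1 y ∂μ < ∞ := by
  have : Nontrivial V := Module.nontrivial_of_finrank_pos (Nat.cast_pos.1 (ha.trans_lt han))
  rw [← lintegral_add_compl _ (measurableSet_ball (x := (0 : V)) (ε := 1))]
  refine ENNReal.add_lt_top.2 ⟨?_, ?_⟩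
  · refine (setLIntegral_mono' measurableSet_ball fun y _ => ?_).trans_lt
      (setLIntegral_ball_ofReal_norm_rpow_neg_lt_top μ han)
    refine mul_le_of_le_one_right' ((rpow_neg_le_rpow_neg_s9 ?_ hb).trans_eq (one_rpow _))
    simp
  · have hfar : ∀ y ∈ (ball (0 : V) 1)ᶜ,
        normPowKernel a b 1 y ≤ 2 ^ a * ENNReal.ofReal ((1 + ‖y‖) ^ (-(a + b))) := by
      intro y hy
      have hy1 : 1 ≤ ‖y‖ := by simpa using hy
      have hdouble : ENNReal.ofReal (1 + ‖y‖) ≤ 2 * ENNReal.ofReal ‖y‖ := by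
        rw [← ENNReal.ofReal_ofNat, ← ENNReal.ofReal_mul zero_le_two]
        exact ENNReal.ofReal_le_ofReal (by linarith)
      have hpos : (0 : ℝ) < 1 + ‖y‖ := by positivity
      calc normPowKernel a b 1 y
          ≤ 2 ^ a * ENNReal.ofReal (1 + ‖y‖) ^ (-a) * ENNReal.ofReal (1 + ‖y‖) ^ (-b) :=
            mul_le_mul_left (rpow_neg_le_of_le_mul two_ne_zero ofNat_ne_top ofReal_ne_top hdouble ha) _
        _ = 2 ^ a * ENNReal.ofReal ((1 + ‖y‖) ^ (-(a + b))) := by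
            rw [mul_assoc, ← rpow_add _ _ (by simpa using hpos) ofReal_ne_top, neg_add,
              ENNReal.ofReal_rpow_of_pos hpos]
    refine (setLIntegral_mono' measurableSet_ball.compl hfar).trans_lt ?_
    rw [lintegral_const_mul' _ _ (rpow_ne_top_of_nonneg ha ofNat_ne_top)]
    exact ENNReal.mul_lt_top (rpow_lt_top_of_nonneg ha ofNat_ne_top)
      ((setLIntegral_le_lintegral _ _).trans_lt (finite_integral_one_add_norm hab))

def normPowKernelBound (a b : ℝ) : ℝ≥0∞ :=
  3 ^ b * ∫⁻ y, normPowKernel a b 1 y ∂μ + 3 ^ a * ∫⁻ y, normPowKernel b a 1 y ∂μ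

theorem normPowKernelBound_ne_top {a b : ℝ} (ha : 0 ≤ a) (hb : 0 ≤ b)
    (han : a < Module.finrank ℝ V) (hbn : b < Module.finrank ℝ V)
    (hab : Module.finrank ℝ V < a + b) : normPowKernelBound μ a b ≠ ∞ := by
  refine ENNReal.add_ne_top.2 ⟨ENNReal.mul_ne_top ?_ ?_, ENNReal.mul_ne_top ?_ ?_⟩
  · exact rpow_ne_top_of_nonneg hb ofNat_ne_top
  · exact (lintegral_normPowKernel_one_lt_top μ ha hb han hab).ne
  · exact rpow_ne_top_of_nonneg ha ofNat_ne_top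
  · exact (lintegral_normPowKernel_one_lt_top μ hb ha hbn (by linarith)).ne

theorem lintegral_rpow_neg_mul_rpow_neg_le {a b e : ℝ} (ha : 0 ≤ a) (hb : 0 ≤ b) (he : 0 ≤ e)
    (c : V) (hd : 0 < e + ‖c‖) :
    ∫⁻ y, ENNReal.ofReal ‖y‖ ^ (-a) * ENNReal.ofReal (e + dist c y) ^ (-b) ∂μ ≤
      normPowKernelBound μ a b * ENNReal.ofReal (e + ‖c‖) ^ ((Module.finrank ℝ V : ℝ) - a - b) := by
  have hpt (y : V) : ENNReal.ofReal ‖y‖ ^ (-a) * ENNReal.ofReal (e + dist c y) ^ (-b) ≤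
      3 ^ b * normPowKernel a b (e + ‖c‖) y + 3 ^ a * normPowKernel b a (e + ‖c‖) (c - y) := by
    rw [dist_eq_norm]
    exact ofReal_rpow_neg_mul_rpow_neg_le (by linarith)
      (by linarith [norm_le_insert' c y]) ha hb
  calc _ ≤ ∫⁻ y, 3 ^ b * normPowKernel a b (e + ‖c‖) y +
        3 ^ a * normPowKernel b a (e + ‖c‖) (c - y) ∂μ := lintegral_mono hpt
    _ = 3 ^ b * ∫⁻ y, normPowKernel a b (e + ‖c‖) y ∂μ +
        3 ^ a * ∫⁻ y, normPowKernel b a (e + ‖c‖) y ∂μ := by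
      rw [lintegral_add_left ((measurable_normPowKernel a b _).const_mul _),
        lintegral_const_mul _ (measurable_normPowKernel a b _),
        lintegral_const_mul' _ _ (rpow_ne_top_of_nonneg ha ofNat_ne_top),
        lintegral_sub_left_eq_self]
    _ = _ := by
      rw [lintegral_normPowKernel μ hd, lintegral_normPowKernel μ hd, sub_right_comm _ b a,
        normPowKernelBound]
      ring

theorem rpow_lintegral_rpow_neg_mul_rpow_neg_le {θ γ p e : ℝ} (hp : 0 < p) (hθ : 0 ≤ θ)
    (hγ : 0 ≤ γ) (he : 0 ≤ e) (c : V) (hd : 0 < e + ‖c‖) :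
    (∫⁻ y, (ENNReal.ofReal ‖y‖ ^ (-θ) *
        (ENNReal.ofReal e + ENNReal.ofReal (dist c y)) ^ (-γ)) ^ p ∂μ) ^ (1 / p) ≤
      normPowKernelBound μ (θ * p) (γ * p) ^ (1 / p) *
        ENNReal.ofReal (e + ‖c‖) ^ (Module.finrank ℝ V / p - θ - γ) := by
  have hrw (y : V) : (ENNReal.ofReal ‖y‖ ^ (-θ) *
      (ENNReal.ofReal e + ENNReal.ofReal (dist c y)) ^ (-γ)) ^ p =
      ENNReal.ofReal ‖y‖ ^ (-(θ * p)) * ENNReal.ofReal (e + dist c y) ^ (-(γ * p)) := by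
    rw [← ENNReal.ofReal_add he dist_nonneg, mul_rpow_of_nonneg _ _ hp.le,
      ← ENNReal.rpow_mul, ← ENNReal.rpow_mul, neg_mul, neg_mul]
  simp_rw [hrw]
  calc _ ≤ (normPowKernelBound μ (θ * p) (γ * p) *
        ENNReal.ofReal (e + ‖c‖) ^ ((Module.finrank ℝ V : ℝ) - θ * p - γ * p)) ^ (1 / p) :=
        ENNReal.rpow_le_rpow
          (lintegral_rpow_neg_mul_rpow_neg_le μ (by positivity) (by positivity) he c hd)
          (by positivity)
    _ = _ := by
        rw [mul_rpow_of_nonneg _ _ (by positivity), ← ENNReal.rpow_mul]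
        congr 2
        field_simp

theorem exists_measure_ball_rpow_inv_finrank_eq [Nontrivial V] :
    ∃ κ : ℝ, 0 < κ ∧ ∀ (c : V) (R : ℝ), 0 ≤ R →
      μ (ball c R) ^ ((1 : ℝ) / Module.finrank ℝ V) = ENNReal.ofReal (κ * R) := by
  set k : ℝ := 1 / Module.finrank ℝ V
  have hk : 0 < k := by have := Module.finrank_pos (R := ℝ) (M := V); positivity
  have hν : μ (ball 0 1) ^ k ≠ ∞ := rpow_ne_top_of_nonneg hk.le measure_ball_lt_top.ne
  refine ⟨(μ (ball 0 1) ^ k).toReal, ENNReal.toReal_pos ?_ hν, fun c R hR => ?_⟩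
  · exact (rpow_pos_of_nonneg (measure_ball_pos μ 0 one_pos) hk.le).ne'
  rw [μ.addHaar_ball c hR, mul_rpow_of_nonneg _ _ hk.le, ENNReal.ofReal_pow hR,
    ← ENNReal.rpow_natCast, ← ENNReal.rpow_mul,
    mul_one_div_cancel (by simp [Module.finrank_pos.ne']), ENNReal.rpow_one,
    ENNReal.ofReal_mul ENNReal.toReal_nonneg, ENNReal.ofReal_toReal hν, mul_comm]

theorem exists_essSup_inv_mul_lintegral_rpow_le {θ γ β p : ℝ} (hp : 0 < p) (hθ : 0 ≤ θ)
    (hγ : 0 ≤ γ) (hθn : θ * p < Module.finrank ℝ V) (hγn : γ * p < Module.finrank ℝ V)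
    (hθγ : Module.finrank ℝ V < (θ + γ) * p) (hβ : β * p = (θ + γ) * p - Module.finrank ℝ V) :
    ∃ C : ℝ≥0, ∀ (c : V) (R : ℝ), 0 < R →
      essSup (fun y => (ENNReal.ofReal ‖y‖ ^ (-β))⁻¹) (μ.restrict (ball c R)) *
        (∫⁻ y, (ENNReal.ofReal ‖y‖ ^ (-θ) *
          (μ (ball c R) ^ ((1 : ℝ) / Module.finrank ℝ V) + ENNReal.ofReal (dist c y)) ^ (-γ)) ^ p
            ∂μ) ^ (1 / p) ≤ C := by
  have hγp : 0 ≤ γ * p := by positivity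
  have : Nontrivial V := Module.nontrivial_of_finrank_pos (Nat.cast_pos.1 (hγp.trans_lt hγn))
  have hβ₀ : 0 ≤ β := by nlinarith
  obtain ⟨κ, hκ, hball⟩ := exists_measure_ball_rpow_inv_finrank_eq μ
  set K := normPowKernelBound μ (θ * p) (γ * p)
  have hK : K ≠ ∞ := normPowKernelBound_ne_top μ (by positivity) hγp hθn hγn (by linarith)
  set M := ENNReal.ofReal (1 + κ⁻¹)
  refine ⟨(M ^ β * K ^ (1 / p)).toNNReal, fun c R hR => ?_⟩
  rw [ENNReal.coe_toNNReal (ENNReal.mul_ne_top (rpow_ne_top_of_nonneg hβ₀ ofReal_ne_top)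
    (rpow_ne_top_of_nonneg (by positivity) hK)), hball c R hR.le]
  set d := κ * R + ‖c‖
  have hd : 0 < d := by positivity
  have hess : essSup (fun y => (ENNReal.ofReal ‖y‖ ^ (-β))⁻¹) (μ.restrict (ball c R)) ≤
      M ^ β * ENNReal.ofReal d ^ β := by
    refine (essSup_inv_rpow_neg_le μ hβ₀ c R).trans ?_
    rw [← mul_rpow_of_nonneg _ _ hβ₀, ← ENNReal.ofReal_mul (by positivity)]
    refine ENNReal.rpow_le_rpow (ENNReal.ofReal_le_ofReal ?_) hβ₀
    have : R = κ⁻¹ * (κ * R) := by field_simp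
    nlinarith [norm_nonneg c, inv_pos.2 hκ]
  have hint := rpow_lintegral_rpow_neg_mul_rpow_neg_le μ hp hθ hγ (by positivity) c hd
  rw [show (Module.finrank ℝ V : ℝ) / p - θ - γ = -β by field_simp; linarith] at hint
  calc _ ≤ M ^ β * ENNReal.ofReal d ^ β * (K ^ (1 / p) * ENNReal.ofReal d ^ (-β)) :=
        mul_le_mul' hess hint
    _ = M ^ β * K ^ (1 / p) * (ENNReal.ofReal d ^ β * ENNReal.ofReal d ^ (-β)) := by ring
    _ = M ^ β * K ^ (1 / p) := by
        rw [← ENNReal.rpow_add _ _ (ENNReal.ofReal_ne_zero_iff.2 hd) ofReal_ne_top,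
          add_neg_cancel, ENNReal.rpow_zero, mul_one]

end

theorem statement9_general (n : ℕ) (δ αt θ βe : ℝ) (r r' : ℝ≥0∞)
    (hconj : r⁻¹ + r'⁻¹ = 1)
    (hδr : δ < αt - (n : ℝ) * r⁻¹.toReal)
    (hθ1 : αt - (n : ℝ) * r⁻¹.toReal - δ < θ) (hθ2 : θ < (n : ℝ) * r'⁻¹.toReal)
    (hβ : βe = θ + δ + (n : ℝ) * r⁻¹.toReal - αt)
    (v w : E n → ℝ≥0∞)
    (hv : v = fun x => (ENNReal.ofReal ‖x‖) ^ (-θ))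
    (hw : w = fun x => (ENNReal.ofReal ‖x‖) ^ (-βe)) :
    ∃ C : ℝ≥0, Hclass n r' αt δ δ v w (C : ℝ≥0∞) := by
  have hsum : (n : ℝ) * r⁻¹.toReal + n * r'⁻¹.toReal = n := by
    have hle : r⁻¹ ≤ 1 ∧ r'⁻¹ ≤ 1 := ⟨hconj ▸ le_self_add, hconj ▸ le_add_self⟩
    rw [← mul_add, ← ENNReal.toReal_add (ne_top_of_le_ne_top one_ne_top hle.1)
      (ne_top_of_le_ne_top one_ne_top hle.2), hconj, toReal_one, mul_one]
  have hθ : 0 < θ := by linarith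
  have hq : 0 < r'⁻¹.toReal := pos_of_mul_pos_right (hθ.trans hθ2) (Nat.cast_nonneg n)
  have hr' : r' ≠ ∞ := by rintro rfl; simp at hq
  rw [ENNReal.toReal_inv r'] at hq hθ2 hsum
  set p := r'.toReal
  have hp : 0 < p := inv_pos.1 hq
  obtain ⟨C, hC⟩ := exists_essSup_inv_mul_lintegral_rpow_le (volume : Measure (E n))
    (θ := θ) (γ := n - αt + δ) (β := βe) hp hθ.le (by linarith)
    (by rw [finrank_euclideanSpace_fin, ← lt_div_iff₀ hp, div_eq_mul_inv]; linarith)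
    (by rw [finrank_euclideanSpace_fin, ← lt_div_iff₀ hp, div_eq_mul_inv]; linarith)
    (by rw [finrank_euclideanSpace_fin, ← div_lt_iff₀ hp, div_eq_mul_inv]; linarith)
    (by rw [finrank_euclideanSpace_fin, hβ]
        linear_combination p * hsum - (n : ℝ) * inv_mul_cancel₀ hp.ne')
  refine ⟨C, fun c R hR => ?_⟩
  simpa [Hclass, eN, hr', hv, hw, finrank_euclideanSpace_fin] using hC c R hR

/-- for `δ < α̃ − n/r`, `α̃ − n/r − δ < θ < n/r'` and
`β = θ + δ + n/r − α̃`, the pair `v(x) = |x|^(−θ)`, `w(x) = |x|^(−β)` belongs to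
`H(r, α̃, δ)`. -/
theorem statement9 (n m : ℕ) (α δ αt θ βe : ℝ) (r r' : ℝ≥0∞)
    (hn : 1 ≤ n) (hα0 : 0 ≤ α) (hαn : α < (n : ℝ)) (hδ0 : 0 < δ) (hδ1 : δ < 1)
    (hmδ : (m : ℝ) * δ < (n : ℝ) - α) (hαt : αt = (m : ℝ) * δ + α)
    (hr : 1 ≤ r) (hconj : r⁻¹ + r'⁻¹ = 1)
    (hδr : δ < αt - (n : ℝ) * r⁻¹.toReal)
    (hθ1 : αt - (n : ℝ) * r⁻¹.toReal - δ < θ) (hθ2 : θ < (n : ℝ) * r'⁻¹.toReal)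
    (hβ : βe = θ + δ + (n : ℝ) * r⁻¹.toReal - αt)
    (v w : E n → ℝ≥0∞)
    (hv : v = fun x => (ENNReal.ofReal ‖x‖) ^ (-θ))
    (hw : w = fun x => (ENNReal.ofReal ‖x‖) ^ (-βe)) :
    ∃ C : ℝ≥0, Hclass n r' αt δ δ v w (C : ℝ≥0∞) :=
  statement9_general n δ αt θ βe r r' hconj hδr hθ1 hθ2 hβ v w hv hw
end
end

section
/- Let n ≥ 1, m ∈ ℕ ∪ {0}, 0 ≤ α < n, 0 < δ < 1 with mδ < n − α, α̃ = mδ + α, and let 1 ≤ r ≤ ∞ and δ̃ satisfy α̃ − n < δ̃ ≤ α̃ − n/r < δ (with n/∞ = 0). Set θ = α̃ − n/r − δ̃ (so 0 ≤ θ < n/r'). Then the pair of weights (v,w) given by v(x) = |x|^(−θ) and w ≡ 1 belongs to the class H(r, α̃, δ̃). -/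
open MeasureTheory Metric ENNReal NNReal

noncomputable section

/-!
Raising the integrand to the power `r'` turns the `H`-condition into the bound
`∫ |y|^(-a) (s + |c - y|)^(-b) dy ≤ K s^(n - a - b)`, where `a = θ r' ∈ [0, n)`,
`b = (n - α̃ + δ) r' > n` and `s = |B|^(1/n)`; the powers of `s` then cancel exactly.
Scaling `y = s z` reduces the bound to `s = 1`. There the integrand is at most `|z|^(-a)` on the
unit ball, integrable because `a < n`, and at most `(1 + |c - z|)^(-b)` off it, integrable because
`b > n`, uniformly in `c`. The case `r = 1` (`r' = ∞`) cannot occur: it would force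
`α̃ - n < δ̃ ≤ α̃ - n`.
-/

theorem ENNReal.rpow_neg_le_one_of_one_le {x : ℝ≥0∞} {p : ℝ} (hx : 1 ≤ x) (hp : 0 ≤ p) :
    x ^ (-p) ≤ 1 := by
  simpa using ENNReal.rpow_le_rpow_of_exponent_le hx (neg_nonpos.2 hp)

theorem ENNReal.toReal_inv_eq_one_sub_inv_toReal {p q : ℝ≥0∞} (h : p⁻¹ + q⁻¹ = 1) :
    p⁻¹.toReal = 1 - q.toReal⁻¹ := by
  have hp : p⁻¹ ≠ ∞ := ne_top_of_le_ne_top one_ne_top (h ▸ le_self_add)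
  have hq : q⁻¹ ≠ ∞ := ne_top_of_le_ne_top one_ne_top (h ▸ le_add_self)
  have := congrArg ENNReal.toReal h
  rw [ENNReal.toReal_add hp hq, ENNReal.toReal_inv q, ENNReal.toReal_one] at this
  linarith

section PowerWeight

variable {F : Type*} [NormedAddCommGroup F] [NormedSpace ℝ F] [FiniteDimensional ℝ F]
  [MeasurableSpace F] [BorelSpace F] (μ : Measure F) [μ.IsAddHaarMeasure]

open Module

lemma lintegral_ball_ofReal_norm_rpow_neg_lt_top {a : ℝ} (ha : 0 ≤ a)
    (had : a < finrank ℝ F) :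
    ∫⁻ z in ball (0 : F) 1, ENNReal.ofReal ‖z‖ ^ (-a) ∂μ < ∞ := by
  have hd : 1 ≤ finrank ℝ F := by exact_mod_cast (ha.trans_lt had : (0 : ℝ) < _)
  have : Nontrivial F := Module.nontrivial_of_finrank_pos (R := ℝ) hd
  have hint : IntegrableOn (fun z : F => ‖z‖ ^ (-a)) (ball 0 1) μ :=
    integrableOn_ball_of_norm_le_rpow (C := 1) hd had
      (ae_of_all _ fun z => by simp [abs_of_nonneg, Real.rpow_nonneg])
      (measurable_norm.pow_const _).aestronglyMeasurable
  refine lt_of_eq_of_lt (lintegral_congr_ae ?_) hint.hasFiniteIntegral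
  filter_upwards [ae_restrict_of_ae (Measure.ae_ne μ 0)] with z hz
  rw [Real.enorm_eq_ofReal (by positivity), ENNReal.ofReal_rpow_of_pos (norm_pos_iff.2 hz)]

lemma lintegral_one_add_ofReal_norm_rpow_neg_lt_top {b : ℝ} (hb : finrank ℝ F < b) :
    ∫⁻ z, (1 + ENNReal.ofReal ‖z‖) ^ (-b) ∂μ < ∞ := by
  refine lt_of_eq_of_lt (lintegral_congr fun z => ?_) (finite_integral_one_add_norm hb)
  rw [← ENNReal.ofReal_rpow_of_pos (by positivity), ENNReal.ofReal_add zero_le_one (norm_nonneg z),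
    ENNReal.ofReal_one]

lemma lintegral_ofReal_norm_rpow_neg_mul_one_add_dist_rpow_neg_le {a b : ℝ} (ha : 0 ≤ a)
    (hb : 0 ≤ b) (c : F) :
    ∫⁻ z, ENNReal.ofReal ‖z‖ ^ (-a) * (1 + ENNReal.ofReal (dist c z)) ^ (-b) ∂μ ≤
      (∫⁻ z in ball (0 : F) 1, ENNReal.ofReal ‖z‖ ^ (-a) ∂μ) +
        ∫⁻ z, (1 + ENNReal.ofReal ‖z‖) ^ (-b) ∂μ := by
  have hpoint : ∀ z : F, ENNReal.ofReal ‖z‖ ^ (-a) * (1 + ENNReal.ofReal (dist c z)) ^ (-b) ≤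
      (ball (0 : F) 1).indicator (fun z => ENNReal.ofReal ‖z‖ ^ (-a)) z +
        (1 + ENNReal.ofReal ‖z - c‖) ^ (-b) := by
    intro z
    rw [dist_comm, dist_eq_norm]
    by_cases hz : z ∈ ball (0 : F) 1
    · rw [Set.indicator_of_mem hz]
      exact le_add_right
        (mul_le_of_le_one_right' (ENNReal.rpow_neg_le_one_of_one_le le_self_add hb))
    · rw [Set.indicator_of_notMem hz, zero_add]
      refine mul_le_of_le_one_left' (ENNReal.rpow_neg_le_one_of_one_le ?_ ha)
      rw [mem_ball_zero_iff, not_lt] at hz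
      exact ENNReal.one_le_ofReal.2 hz
  calc _ ≤ ∫⁻ z, (ball (0 : F) 1).indicator (fun z => ENNReal.ofReal ‖z‖ ^ (-a)) z +
        (1 + ENNReal.ofReal ‖z - c‖) ^ (-b) ∂μ := lintegral_mono hpoint
    _ = _ := by
      rw [lintegral_add_left (by measurability), lintegral_indicator measurableSet_ball,
        lintegral_sub_right_eq_self (fun z => (1 + ENNReal.ofReal ‖z‖) ^ (-b)) c]

lemma lintegral_ofReal_norm_rpow_neg_mul_add_dist_rpow_neg_eq {a b s : ℝ} (hs : 0 < s) (c : F) :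
    ∫⁻ y, ENNReal.ofReal ‖y‖ ^ (-a) * (ENNReal.ofReal s + ENNReal.ofReal (dist c y)) ^ (-b) ∂μ =
      ENNReal.ofReal s ^ ((finrank ℝ F : ℝ) - a - b) *
        ∫⁻ z, ENNReal.ofReal ‖z‖ ^ (-a) * (1 + ENNReal.ofReal (dist (s⁻¹ • c) z)) ^ (-b) ∂μ := by
  set f : F → ℝ≥0∞ := fun y =>
    ENNReal.ofReal ‖y‖ ^ (-a) * (ENNReal.ofReal s + ENNReal.ofReal (dist c y)) ^ (-b)
  have hS0 : ENNReal.ofReal s ≠ 0 := by simpa using hs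
  have hscale : ∫⁻ z, f (s • z) ∂μ = ENNReal.ofReal (s ^ finrank ℝ F)⁻¹ * ∫⁻ y, f y ∂μ := by
    have h := lintegral_map_equiv (μ := μ) f (MeasurableEquiv.smul₀ s hs.ne')
    rw [MeasurableEquiv.coe_smul₀, Measure.map_addHaar_smul μ hs.ne', lintegral_smul_measure,
      abs_of_pos (by positivity)] at h
    exact h.symm
  have hpoint : ∀ z, f (s • z) = ENNReal.ofReal s ^ (-a - b) *
      (ENNReal.ofReal ‖z‖ ^ (-a) * (1 + ENNReal.ofReal (dist (s⁻¹ • c) z)) ^ (-b)) := by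
    intro z
    have hdist : dist c (s • z) = s * dist (s⁻¹ • c) z := by
      simpa only [smul_inv_smul₀ hs.ne', Real.norm_of_nonneg hs.le] using
        dist_smul₀ s (s⁻¹ • c) z
    simp only [f, norm_smul, Real.norm_of_nonneg hs.le, hdist,
      ENNReal.ofReal_mul hs.le, ← mul_one_add (ENNReal.ofReal s) (ENNReal.ofReal _)]
    rw [ENNReal.mul_rpow_of_ne_top ENNReal.ofReal_ne_top ENNReal.ofReal_ne_top,
      ENNReal.mul_rpow_of_ne_top ENNReal.ofReal_ne_top (by simp),
      sub_eq_add_neg, ENNReal.rpow_add _ _ hS0 ENNReal.ofReal_ne_top]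
    ring
  calc ∫⁻ y, f y ∂μ = ENNReal.ofReal (s ^ finrank ℝ F) * ∫⁻ z, f (s • z) ∂μ := by
        rw [hscale, ← mul_assoc, ← ENNReal.ofReal_mul (by positivity),
          mul_inv_cancel₀ (by positivity), ENNReal.ofReal_one, one_mul]
    _ = _ := by
        simp_rw [hpoint]
        rw [lintegral_const_mul' _ _ (ENNReal.rpow_ne_top_of_ne_zero hS0 ENNReal.ofReal_ne_top),
          ← mul_assoc, ENNReal.ofReal_pow hs.le, ← ENNReal.rpow_natCast,
          ← ENNReal.rpow_add _ _ hS0 ENNReal.ofReal_ne_top, add_sub_assoc', ← sub_eq_add_neg]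

lemma lintegral_ofReal_norm_rpow_neg_mul_add_dist_rpow_neg_le {a b : ℝ} (ha : 0 ≤ a) (hb : 0 ≤ b)
    {T : ℝ≥0∞} (hT0 : T ≠ 0) (hT : T ≠ ∞) (c : F) :
    ∫⁻ y, ENNReal.ofReal ‖y‖ ^ (-a) * (T + ENNReal.ofReal (dist c y)) ^ (-b) ∂μ ≤
      ((∫⁻ z in ball (0 : F) 1, ENNReal.ofReal ‖z‖ ^ (-a) ∂μ) +
        ∫⁻ z, (1 + ENNReal.ofReal ‖z‖) ^ (-b) ∂μ) * T ^ ((finrank ℝ F : ℝ) - a - b) := by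
  rw [← ENNReal.ofReal_toReal hT, lintegral_ofReal_norm_rpow_neg_mul_add_dist_rpow_neg_eq μ
    (ENNReal.toReal_pos hT0 hT), mul_comm]
  exact mul_le_mul_left (lintegral_ofReal_norm_rpow_neg_mul_one_add_dist_rpow_neg_le μ ha hb _) _

end PowerWeight

lemma hclass_const_one_of_lintegral_rpow_le {n : ℕ} {r' : ℝ≥0∞} (hr'0 : r' ≠ 0) (hr' : r' ≠ ∞)
    {αt δ δt : ℝ} {v : E n → ℝ≥0∞} {K : ℝ≥0∞} (hK : K ≠ ∞)
    (h : ∀ (c : E n) (T : ℝ≥0∞), T ≠ 0 → T ≠ ∞ →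
      ∫⁻ y, (v y * (T + ENNReal.ofReal (dist c y)) ^ (-((n : ℝ) - αt + δ))) ^ r'.toReal ≤
        K * T ^ ((δt - δ) * r'.toReal)) :
    ∃ C : ℝ≥0, Hclass n r' αt δ δt v (fun _ => 1) C := by
  set ρ := r'.toReal
  have hρ : 0 < ρ := ENNReal.toReal_pos hr'0 hr'
  refine ⟨(K ^ ρ⁻¹).toNNReal, fun c R hR => ?_⟩
  rw [ENNReal.coe_toNNReal (ENNReal.rpow_ne_top_of_nonneg (by positivity) hK)]
  set V := volume (ball c R)
  have hV0 : V ≠ 0 := (measure_ball_pos volume c hR).ne'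
  have hV : V ≠ ∞ := measure_ball_lt_top.ne
  set T := V ^ ((1 : ℝ) / n)
  have hT0 : T ≠ 0 := (ENNReal.rpow_pos (pos_iff_ne_zero.2 hV0) hV).ne'
  have hT : T ≠ ∞ := ENNReal.rpow_ne_top_of_nonneg (by positivity) hV
  have hw : essSup (fun _ => (1 : ℝ≥0∞)⁻¹) (volume.restrict (ball c R)) ≤ 1 :=
    essSup_le_of_ae_le 1 (ae_of_all _ fun _ => by simp)
  have hVT : V ^ ((δ - δt) / n) = T ^ (δ - δt) := by
    rw [← ENNReal.rpow_mul]; ring_nf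
  have heN : eN r' (fun y => v y * (T + ENNReal.ofReal (dist c y)) ^ (-((n : ℝ) - αt + δ)))
      volume ≤ K ^ ρ⁻¹ * T ^ (δt - δ) := by
    rw [eN, if_neg hr', one_div]
    calc _ ≤ (K * T ^ ((δt - δ) * ρ)) ^ ρ⁻¹ := ENNReal.rpow_le_rpow (h c T hT0 hT) (by positivity)
      _ = _ := by
        rw [ENNReal.mul_rpow_of_nonneg _ _ (by positivity), ← ENNReal.rpow_mul,
          mul_inv_cancel_right₀ hρ.ne']
  calc _ ≤ 1 * T ^ (δ - δt) * (K ^ ρ⁻¹ * T ^ (δt - δ)) := by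
        rw [hVT]; exact mul_le_mul' (mul_le_mul_left hw _) heN
    _ = K ^ ρ⁻¹ := by
        rw [one_mul, mul_left_comm, ← ENNReal.rpow_add _ _ hT0 hT,
          show δ - δt + (δt - δ) = 0 by ring, ENNReal.rpow_zero, mul_one]

theorem statement10_general (n : ℕ) (δ δt αt θ : ℝ) (r r' : ℝ≥0∞)
    (hconj : r⁻¹ + r'⁻¹ = 1)
    (h1 : αt - (n : ℝ) < δt) (h2 : δt ≤ αt - (n : ℝ) * r⁻¹.toReal)
    (h3 : αt - (n : ℝ) * r⁻¹.toReal < δ)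
    (hθ : θ = αt - (n : ℝ) * r⁻¹.toReal - δt)
    (v w : E n → ℝ≥0∞)
    (hv : v = fun x => (ENNReal.ofReal ‖x‖) ^ (-θ))
    (hw : w = fun _ => 1) :
    ∃ C : ℝ≥0, Hclass n r' αt δ δt v w (C : ℝ≥0∞) := by
  subst hv hw hθ
  have hr' : r' ≠ ∞ := by
    rintro rfl
    obtain rfl : r = 1 := by simpa using hconj
    simp only [inv_one, ENNReal.toReal_one, mul_one] at h2
    linarith
  have hr'0 : r' ≠ 0 := by rintro rfl; simp at hconj
  set ρ := r'.toReal
  have hρ : 0 < ρ := ENNReal.toReal_pos hr'0 hr'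
  rw [ENNReal.toReal_inv_eq_one_sub_inv_toReal hconj] at h2 h3 ⊢
  set a := (αt - n * (1 - ρ⁻¹) - δt) * ρ
  set b := (n - αt + δ) * ρ
  have hρρ : ρ⁻¹ * ρ = 1 := inv_mul_cancel₀ hρ.ne'
  have ha : 0 ≤ a := mul_nonneg (by linarith) hρ.le
  have han : a < n := by nlinarith
  have hnb : n < b := by nlinarith
  have hdim : ((Module.finrank ℝ (E n) : ℕ) : ℝ) = n := by rw [finrank_euclideanSpace_fin]
  have hK := ENNReal.add_ne_top.2
    ⟨(lintegral_ball_ofReal_norm_rpow_neg_lt_top volume ha (hdim ▸ han)).ne,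
      (lintegral_one_add_ofReal_norm_rpow_neg_lt_top volume (hdim ▸ hnb)).ne⟩
  refine hclass_const_one_of_lintegral_rpow_le hr'0 hr' hK fun c T hT0 hT => ?_
  calc _ = ∫⁻ y, ENNReal.ofReal ‖y‖ ^ (-a) * (T + ENNReal.ofReal (dist c y)) ^ (-b) := by
        refine lintegral_congr fun y => ?_
        rw [ENNReal.mul_rpow_of_nonneg _ _ hρ.le, ← ENNReal.rpow_mul, ← ENNReal.rpow_mul,
          neg_mul, neg_mul]
    _ ≤ _ :=
      lintegral_ofReal_norm_rpow_neg_mul_add_dist_rpow_neg_le volume ha (by linarith) hT0 hT c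
    _ = _ := by
        rw [hdim]; congr 2; simp only [a, b]; field_simp; ring

/-- for `α̃ − n < δ̃ ≤ α̃ − n/r < δ` and `θ = α̃ − n/r − δ̃`, the pair
`v(x) = |x|^(−θ)`, `w ≡ 1` belongs to `H(r, α̃, δ̃)`. -/
theorem statement10 (n m : ℕ) (α δ δt αt θ : ℝ) (r r' : ℝ≥0∞)
    (hn : 1 ≤ n) (hα0 : 0 ≤ α) (hαn : α < (n : ℝ)) (hδ0 : 0 < δ) (hδ1 : δ < 1)
    (hmδ : (m : ℝ) * δ < (n : ℝ) - α) (hαt : αt = (m : ℝ) * δ + α)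
    (hr : 1 ≤ r) (hconj : r⁻¹ + r'⁻¹ = 1)
    (h1 : αt - (n : ℝ) < δt) (h2 : δt ≤ αt - (n : ℝ) * r⁻¹.toReal)
    (h3 : αt - (n : ℝ) * r⁻¹.toReal < δ)
    (hθ : θ = αt - (n : ℝ) * r⁻¹.toReal - δt)
    (v w : E n → ℝ≥0∞)
    (hv : v = fun x => (ENNReal.ofReal ‖x‖) ^ (-θ))
    (hw : w = fun _ => 1) :
    ∃ C : ℝ≥0, Hclass n r' αt δ δt v w (C : ℝ≥0∞) :=
  statement10_general n δ δt αt θ r r' hconj h1 h2 h3 hθ v w hv hw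
end
end
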